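/- arXiv:1302.0602 — 16 statements merged into one kernel-verified Lean document; each statement's English description precedes it below -/
import Mathlib

section
/- Let R be a commutative Euclidean domain and n a positive integer. Then every singular n×n matrix over R (i.e., every A ∈ Mₙ(R) with det A = 0) can be written as a product of idempotent matrices. -/
/-!
Let `S` be the submonoid generated by the idempotent matrices. If `v ᵥ* A = 0` and `u` is
dual to both `v` and `w` (`v ⬝ᵥ u = w ⬝ᵥ u = 1`), then `A = (1 - u vᵀ) * ((1 - u wᵀ) * A)`,
where the first factor is idempotent and `w` annihilates the second one from the left. Hence
a left-kernel vector of `A` can be moved, at the cost of idempotent factors, along any chain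
of vectors in which consecutive ones share a dual vector.

A singular matrix over a principal ideal domain has a unimodular left-kernel vector, and over
a Euclidean domain every unimodular vector of length at least two is chained to the last unit
vector: in length two by the Euclidean algorithm, in higher length by choosing (with prime
avoidance) a dual vector whose tail is unimodular, which chains the vector to one with first
coordinate zero. Doing this for `Aᵀ` and then for `A` writes `A = P * C * Q` with `P, Q ∈ S`
and `C = diag(B, 0)`. Finally `diag(B, 0) = P' * diag(B', 1) * Q'` with `P', Q'` idempotent
and `B'` obtained from `B` by replacing its first row with zero; `B'` is singular, so
induction on the size applies.
-/

open Matrix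

def idempotentProducts (M : Type*) [Monoid M] : Submonoid M :=
  Submonoid.closure {e | IsIdempotentElem e}

section Monoid

variable {M N : Type*} [Monoid M] [Monoid N]

theorem IsIdempotentElem.mem_idempotentProducts {e : M} (he : IsIdempotentElem e) :
    e ∈ idempotentProducts M :=
  Submonoid.subset_closure he

theorem map_mem_idempotentProducts {F : Type*} [FunLike F M N] [MonoidHomClass F M N] (f : F)
    {x : M} (hx : x ∈ idempotentProducts M) : f x ∈ idempotentProducts N := by
  induction hx using Submonoid.closure_induction with
  | mem e he => exact (he.map f).mem_idempotentProducts
  | one => simp [one_mem]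
  | mul x y _ _ hx hy => simpa using mul_mem hx hy

end Monoid

section Bezout

variable {R ι : Type*} [CommRing R] [IsBezout R] [Fintype ι]

theorem exists_dvd_and_dotProduct_eq (w : ι → R) :
    ∃ g : R, (∀ i, g ∣ w i) ∧ ∃ c : ι → R, c ⬝ᵥ w = g := by
  let I := Ideal.span (Set.range w)
  have : I.IsPrincipal := IsBezout.isPrincipal_of_FG I (Submodule.fg_span (Set.finite_range w))
  refine ⟨Submodule.IsPrincipal.generator I, fun i => ?_, ?_⟩
  · exact (Submodule.IsPrincipal.mem_iff_generator_dvd I).1 (Ideal.subset_span ⟨i, rfl⟩)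
  · exact (Submodule.mem_span_range_iff_exists_fun R).1 (Submodule.IsPrincipal.generator_mem I)

end Bezout

section PID

variable {R : Type*} [CommRing R] [IsDomain R] [IsPrincipalIdealRing R]

theorem exists_isCoprime_add_mul {a b M : R} (hM : M ≠ 0) {s t c : R}
    (h : s * a + t * b + c * M = 1) : ∃ l : R, IsCoprime (b + l * a) M := by
  classical
  let l := ((UniqueFactorizationMonoid.factors M).filter (¬ · ∣ b)).prod
  have dvd_l_iff : ∀ p, Prime p → p ∣ M → (p ∣ l ↔ ¬ p ∣ b) := by
    intro p hp hpM
    constructor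
    · intro hpl hpb
      obtain ⟨q, hq, hpq⟩ := hp.exists_mem_multiset_dvd hpl
      rw [Multiset.mem_filter] at hq
      have hq' : Prime q := UniqueFactorizationMonoid.prime_of_factor q hq.1
      exact hq.2 ((hp.associated_of_dvd hq' hpq).dvd_iff_dvd_left.1 hpb)
    · intro hpb
      obtain ⟨q, hq, hpq⟩ :=
        UniqueFactorizationMonoid.exists_mem_factors_of_dvd hM hp.irreducible hpM
      have hqb : ¬ q ∣ b := fun hqb => hpb (hpq.dvd.trans hqb)
      exact hpq.dvd.trans (Multiset.dvd_prod (Multiset.mem_filter.2 ⟨hq, hqb⟩))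
  refine ⟨l, isCoprime_of_prime_dvd (fun h0 => hM h0.2) fun p hp hpx hpM => ?_⟩
  by_cases hpb : p ∣ b
  · have hpa : ¬ p ∣ a := fun hpa => hp.not_isUnit (isUnit_of_dvd_one (h ▸
      dvd_add (dvd_add (hpa.mul_left s) (hpb.mul_left t)) (hpM.mul_left c)))
    have hpla : p ∣ l * a := by simpa using dvd_sub hpx hpb
    exact (hp.dvd_or_dvd hpla).elim (fun hpl => (dvd_l_iff p hp hpM).1 hpl hpb) hpa
  · exact hpb (by simpa using dvd_sub hpx (((dvd_l_iff p hp hpM).2 hpb).mul_right a))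

end PID

namespace Matrix

theorem transpose_mem_idempotentProducts {n R : Type*} [Fintype n] [DecidableEq n]
    [CommSemiring R] {A : Matrix n n R} (hA : A ∈ idempotentProducts (Matrix n n R)) :
    Aᵀ ∈ idempotentProducts (Matrix n n R) := by
  induction hA using Submonoid.closure_induction with
  | mem E hE =>
    exact IsIdempotentElem.mem_idempotentProducts <| by
      rw [IsIdempotentElem, ← transpose_mul, hE.eq]
  | one => simp [one_mem]
  | mul A B _ _ hA hB => simpa using mul_mem hB hA

theorem vecCons_zero_single {R : Type*} [Zero R] {k : ℕ} (i : Fin k) (r : R) :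
    vecCons 0 (Pi.single i r) = Pi.single i.succ r := by
  ext j
  cases j using Fin.cases <;> simp [Pi.single_apply, Fin.succ_ne_zero]

section CommRing

variable {n R : Type*} [Fintype n] [DecidableEq n] [CommRing R]

def HasCommonDual (x y : n → R) : Prop :=
  ∃ u, x ⬝ᵥ u = 1 ∧ y ⬝ᵥ u = 1

abbrev DualChain : (n → R) → (n → R) → Prop :=
  Relation.ReflTransGen HasCommonDual

theorem isIdempotentElem_one_sub_vecMulVec {u v : n → R} (h : v ⬝ᵥ u = 1) :
    IsIdempotentElem (1 - vecMulVec u v) := by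
  have : vecMulVec u v * vecMulVec u v = vecMulVec u v := by
    rw [vecMulVec_mul_vecMulVec, h, one_smul]
  simp only [IsIdempotentElem, sub_mul, mul_sub, one_mul, mul_one, this, sub_self, sub_zero]

theorem one_sub_vecMulVec_mul_one_sub_vecMulVec_mul {u v w : n → R} (hv : v ⬝ᵥ u = 1)
    {A : Matrix n n R} (hA : v ᵥ* A = 0) :
    (1 - vecMulVec u v) * ((1 - vecMulVec u w) * A) = A := by
  have : vecMulVec u v * vecMulVec u w = vecMulVec u w := by
    rw [vecMulVec_mul_vecMulVec, hv, one_smul]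
  rw [← mul_assoc, sub_mul, mul_sub, mul_sub, this, one_mul, mul_one, one_mul,
    sub_sub_sub_cancel_right, sub_mul, one_mul, vecMulVec_mul, hA, vecMulVec_zero, sub_zero]

theorem vecMul_one_sub_vecMulVec {u w : n → R} (hw : w ⬝ᵥ u = 1) :
    w ᵥ* (1 - vecMulVec u w) = 0 := by
  rw [vecMul_sub, vecMul_one, vecMul_vecMulVec, hw, one_smul, sub_self]

theorem DualChain.exists_factorization {v w : n → R} (h : DualChain v w) {A : Matrix n n R}
    (hA : v ᵥ* A = 0) :
    ∃ P ∈ idempotentProducts (Matrix n n R), ∃ F : Matrix n n R,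
      A = P * (F * A) ∧ w ᵥ* (F * A) = 0 := by
  induction h using Relation.ReflTransGen.head_induction_on generalizing A with
  | refl => exact ⟨1, one_mem _, 1, by simp, by simpa⟩
  | @head v v' step _ ih =>
    obtain ⟨u, hv, hv'⟩ := step
    set E : Matrix n n R := 1 - vecMulVec u v
    set E' : Matrix n n R := 1 - vecMulVec u v'
    obtain ⟨P, hP, F, hEA, hw⟩ := ih (A := E' * A) <| by
      rw [← vecMul_vecMul, vecMul_one_sub_vecMulVec hv', zero_vecMul]
    refine ⟨E * P, mul_mem (isIdempotentElem_one_sub_vecMulVec hv).mem_idempotentProducts hP,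
      F * E', ?_, by rwa [mul_assoc]⟩
    calc A = E * (E' * A) := (one_sub_vecMulVec_mul_one_sub_vecMulVec_mul hv hA).symm
      _ = E * P * (F * E' * A) := by rw [hEA]; simp only [mul_assoc]

theorem DualChain.vecCons_zero {k : ℕ} {x y : Fin k → R} (h : DualChain x y) :
    DualChain (vecCons 0 x) (vecCons 0 y) :=
  h.lift _ fun _ _ ⟨u, hx, hy⟩ => ⟨vecCons 0 u, by simpa using hx, by simpa using hy⟩

theorem exists_unimodular_vecMul_eq_zero [IsDomain R] [IsPrincipalIdealRing R]
    {A : Matrix n n R} (hA : A.det = 0) : ∃ b u : n → R, b ⬝ᵥ u = 1 ∧ b ᵥ* A = 0 := by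
  obtain ⟨v, hv0, hvA⟩ := exists_vecMul_eq_zero_iff.2 hA
  obtain ⟨g, hg, c, hc⟩ := exists_dvd_and_dotProduct_eq v
  choose b hb using hg
  have hvb : v = g • b := funext hb
  have hg0 : g ≠ 0 := by rintro rfl; exact hv0 (by simpa using hvb)
  refine ⟨b, c, ?_, ?_⟩
  · apply mul_left_cancel₀ hg0
    rw [mul_one, ← smul_eq_mul, ← smul_dotProduct, ← hvb, dotProduct_comm, hc]
  · rw [hvb, smul_vecMul] at hvA
    exact (smul_eq_zero.1 hvA).resolve_left hg0

end CommRing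

section Blocks

variable {ι R : Type*} [Fintype ι] [DecidableEq ι]

def fromBlocksOneHom [Semiring R] (κ : Type*) [Fintype κ] [DecidableEq κ] :
    Matrix ι ι R →* Matrix (ι ⊕ κ) (ι ⊕ κ) R where
  toFun C := fromBlocks C 0 0 1
  map_one' := fromBlocks_one
  map_mul' C D := by simp [fromBlocks_multiply]

theorem fromBlocks_zero_eq_mul_mul [Semiring R] (B : Matrix ι ι R) (i : ι) :
    fromBlocks B 0 0 (0 : Matrix (Fin 1) (Fin 1) R) =
      fromBlocks 1 (replicateCol (Fin 1) (Pi.single i (1 : R))) 0 0 *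
        fromBlocksOneHom (Fin 1) (B.updateRow i 0) *
          fromBlocks 1 0 (replicateRow (Fin 1) (B i)) 0 := by
  have hB : B = B.updateRow i 0 +
      replicateCol (Fin 1) (Pi.single i (1 : R)) * replicateRow (Fin 1) (B i) := by
    ext j k
    by_cases hj : j = i <;> simp [hj, updateRow_apply, mul_apply]
  simpa [fromBlocksOneHom, fromBlocks_multiply] using hB

theorem fromBlocks_zero_mem_idempotentProducts [Semiring R] {B : Matrix ι ι R} (i : ι)
    (hB : B.updateRow i 0 ∈ idempotentProducts (Matrix ι ι R)) :
    fromBlocks B 0 0 (0 : Matrix (Fin 1) (Fin 1) R) ∈ idempotentProducts _ := by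
  rw [fromBlocks_zero_eq_mul_mul B i]
  refine mul_mem (mul_mem (IsIdempotentElem.mem_idempotentProducts ?_)
    (map_mem_idempotentProducts _ hB)) (IsIdempotentElem.mem_idempotentProducts ?_) <;>
    simp [IsIdempotentElem, fromBlocks_multiply]

end Blocks

section EuclideanDomain

variable {R : Type*} [EuclideanDomain R]

theorem dualChain_vecCons_zero_one :
    ∀ {b a s t : R}, a * s + b * t = 1 → DualChain ![a, b] ![0, 1] := by
  intro b
  induction b using (EuclideanDomain.r_wellFounded (R := R)).transGen.induction with
  | h b ih => ?_
  intro a s t h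
  by_cases hb : b = 0
  · subst hb
    exact .single ⟨![s, 1], by simpa using h, by simp⟩
  have hs := EuclideanDomain.div_add_mod s b
  by_cases hs0 : s % b = 0
  · have hbt : b * (t + s / b * a) = 1 := by linear_combination h + a * hs - a * hs0
    exact .head (b := ![1, b]) ⟨![0, t + s / b * a], by simpa using hbt, by simpa using hbt⟩
      (.single ⟨![1 - b, 1], by simp, by simp⟩)
  set s' := s % b
  set t' := t + s / b * a
  have h' : a * s' + b * t' = 1 := by linear_combination h + a * hs
  have hb' := EuclideanDomain.div_add_mod b s'
  have h'' : (a + b / s' * t') * s' + b % s' * t' = 1 := by linear_combination h' + t' * hb'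
  exact .head ⟨![s', t'], by simpa using h', by simpa using h''⟩
    (ih _ (.head (EuclideanDomain.mod_lt b hs0) (.single (EuclideanDomain.mod_lt s hb))) h'')

theorem exists_dotProduct_eq_one_vecTail {m : ℕ} {x y : Fin (m + 3) → R} (h : x ⬝ᵥ y = 1) :
    ∃ y' z, x ⬝ᵥ y' = 1 ∧ z ⬝ᵥ vecTail y' = 1 := by
  obtain ⟨x₀, x₁, xr, rfl⟩ : ∃ x₀ x₁ xr, x = vecCons x₀ (vecCons x₁ xr) :=
    ⟨vecHead x, vecHead (vecTail x), vecTail (vecTail x), by simp only [cons_head_tail]⟩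
  obtain ⟨y₀, y₁, yr, rfl⟩ : ∃ y₀ y₁ yr, y = vecCons y₀ (vecCons y₁ yr) :=
    ⟨vecHead y, vecHead (vecTail y), vecTail (vecTail y), by simp only [cons_head_tail]⟩
  simp only [cons_dotProduct_cons] at h
  obtain ⟨M, hM, c, hc⟩ := exists_dvd_and_dotProduct_eq yr
  -- In both cases `y'` is `y` plus a vector orthogonal to `x`, chosen to make its tail unimodular.
  by_cases hM0 : M = 0
  · have hyr : yr = 0 := funext fun i => by simpa [hM0] using hM i
    subst hyr
    simp only [dotProduct_zero, add_zero] at h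
    refine ⟨vecCons (y₀ - y₀ * xr 0) (vecCons y₁ (Pi.single 0 (y₀ * x₀))),
      vecCons x₁ (Pi.single 0 1), ?_, ?_⟩
    · simp only [cons_dotProduct_cons, dotProduct_single]
      linear_combination h
    · simp only [tail_cons, cons_dotProduct_cons, single_dotProduct, Pi.single_eq_same]
      linear_combination h
  · choose d hd using hM
    have h' : y₀ * x₀ + x₁ * y₁ + xr ⬝ᵥ d * M = 1 := by
      rw [show yr = M • d from funext hd, dotProduct_smul, smul_eq_mul] at h
      linear_combination h
    obtain ⟨l, α, β, hl⟩ := exists_isCoprime_add_mul hM0 h'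
    refine ⟨vecCons (y₀ - l * x₁) (vecCons (y₁ + l * x₀) yr), vecCons α (β • c), ?_, ?_⟩
    · simp only [cons_dotProduct_cons]
      linear_combination h
    · simp only [tail_cons, cons_dotProduct_cons, smul_dotProduct, hc, smul_eq_mul]
      linear_combination hl

theorem dualChain_single_last :
    ∀ {m : ℕ} {x u : Fin (m + 2) → R}, x ⬝ᵥ u = 1 →
      DualChain x (Pi.single (Fin.last (m + 1)) 1)
  | 0, x, u, h => by
    obtain ⟨a, b, rfl⟩ : ∃ a b, x = ![a, b] := ⟨x 0, x 1, by ext i; fin_cases i <;> rfl⟩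
    obtain ⟨s, t, rfl⟩ : ∃ s t, u = ![s, t] := ⟨u 0, u 1, by ext i; fin_cases i <;> rfl⟩
    have he : (Pi.single (Fin.last 1) 1 : Fin 2 → R) = ![0, 1] := by
      ext i; fin_cases i <;> simp
    rw [he]
    exact dualChain_vecCons_zero_one (by simpa using h)
  | m + 1, x, u, h => by
    obtain ⟨y, z, hxy, hzy⟩ := exists_dotProduct_eq_one_vecTail h
    rw [← Fin.succ_last, ← vecCons_zero_single]
    exact .head ⟨y, hxy, by simpa using hzy⟩ (dualChain_single_last hzy).vecCons_zero

theorem exists_mem_idempotentProducts_mul_row_last_eq_zero {m : ℕ}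
    {A : Matrix (Fin (m + 2)) (Fin (m + 2)) R} (hA : A.det = 0) :
    ∃ P ∈ idempotentProducts (Matrix (Fin (m + 2)) (Fin (m + 2)) R), ∃ F : Matrix _ _ R,
      A = P * (F * A) ∧ (F * A) (Fin.last (m + 1)) = 0 := by
  obtain ⟨b, u, hbu, hbA⟩ := exists_unimodular_vecMul_eq_zero hA
  obtain ⟨P, hP, F, hPF, hF⟩ := (dualChain_single_last hbu).exists_factorization hbA
  exact ⟨P, hP, F, hPF, by rwa [single_one_vecMul] at hF⟩

theorem mem_idempotentProducts_of_row_col_last_eq_zero {m : ℕ}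
    (ih : ∀ C : Matrix (Fin (m + 1)) (Fin (m + 1)) R, C.det = 0 →
      C ∈ idempotentProducts (Matrix (Fin (m + 1)) (Fin (m + 1)) R))
    {A : Matrix (Fin (m + 2)) (Fin (m + 2)) R} (hrow : A (Fin.last (m + 1)) = 0)
    (hcol : ∀ i, A i (Fin.last (m + 1)) = 0) :
    A ∈ idempotentProducts (Matrix (Fin (m + 2)) (Fin (m + 2)) R) := by
  set B := A.submatrix Fin.castSucc Fin.castSucc
  have hA : A = reindexAlgEquiv R R finSumFinEquiv
      (fromBlocks B 0 0 (0 : Matrix (Fin 1) (Fin 1) R)) := by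
    ext i j
    cases i using Fin.lastCases <;> cases j using Fin.lastCases <;>
      simp [B, hrow, hcol, finSumFinEquiv_symm_apply_castSucc]
  rw [hA]
  exact map_mem_idempotentProducts _ (fromBlocks_zero_mem_idempotentProducts 0
    (ih _ (det_eq_zero_of_row_eq_zero 0 fun j => by simp)))

theorem mem_idempotentProducts_of_det_eq_zero :
    ∀ {m : ℕ} {A : Matrix (Fin (m + 1)) (Fin (m + 1)) R}, A.det = 0 →
      A ∈ idempotentProducts (Matrix (Fin (m + 1)) (Fin (m + 1)) R)
  | 0, A, hA => by
    have : A = 0 := by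
      ext i j
      rwa [Fin.eq_zero i, Fin.eq_zero j, ← det_fin_one A]
    exact this ▸ IsIdempotentElem.zero.mem_idempotentProducts
  | m + 1, A, hA => by
    obtain ⟨P, hP, F, hAP, hrowT⟩ :=
      exists_mem_idempotentProducts_mul_row_last_eq_zero (A := Aᵀ) (by rwa [det_transpose])
    set B := A * Fᵀ
    have hAB : A = B * Pᵀ := by simpa [B, transpose_mul] using congrArg transpose hAP
    have hBcol : ∀ i, B i (Fin.last (m + 1)) = 0 := fun i => by
      rw [← transpose_apply B, transpose_mul, transpose_transpose]
      exact congrFun hrowT i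
    obtain ⟨P', hP', F', hBP', hrow⟩ :=
      exists_mem_idempotentProducts_mul_row_last_eq_zero (det_eq_zero_of_column_eq_zero _ hBcol)
    have hcol : ∀ i, (F' * B) i (Fin.last (m + 1)) = 0 := fun i => by simp [mul_apply, hBcol]
    rw [hAB, hBP']
    exact mul_mem (mul_mem hP' (mem_idempotentProducts_of_row_col_last_eq_zero
      (fun _ => mem_idempotentProducts_of_det_eq_zero) hrow hcol))
      (transpose_mem_idempotentProducts hP)

end EuclideanDomain

end Matrix

theorem singular_matrix_is_product_of_idempotents_of_euclideanDomain_general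
    (R : Type*) [EuclideanDomain R] (n : ℕ)
    (A : Matrix (Fin n) (Fin n) R) (hA : A.det = 0) :
    ∃ l : List (Matrix (Fin n) (Fin n) R),
      (∀ E ∈ l, E * E = E) ∧ A = l.prod := by
  cases n with
  | zero => simp at hA
  | succ m =>
    obtain ⟨l, hl, rfl⟩ :=
      Submonoid.exists_list_of_mem_closure (Matrix.mem_idempotentProducts_of_det_eq_zero hA)
    exact ⟨l, hl, rfl⟩

/-- Every singular `n × n` matrix over a commutative Euclidean domain is a
product of idempotent matrices. -/
theorem singular_matrix_is_product_of_idempotents_of_euclideanDomain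
    (R : Type*) [EuclideanDomain R] (n : ℕ) (hn : 0 < n)
    (A : Matrix (Fin n) (Fin n) R) (hA : A.det = 0) :
    ∃ l : List (Matrix (Fin n) (Fin n) R),
      (∀ E ∈ l, E * E = E) ∧ A = l.prod :=
  singular_matrix_is_product_of_idempotents_of_euclideanDomain_general R n A hA
end

section
/- Let R be any (possibly noncommutative) ring and a, b ∈ R. Then the 3×3 matrix with diagonal entries a, b, 0 and all off-diagonal entries 0 is a product of idempotent matrices. -/
/-- Over any ring `R`, the `3 × 3` diagonal matrix `diag(a, b, 0)` is a
product of idempotent matrices. -/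
theorem diag_a_b_zero_is_product_of_idempotents
    (R : Type*) [Ring R] (a b : R) :
    ∃ l : List (Matrix (Fin 3) (Fin 3) R),
      (∀ E ∈ l, E * E = E) ∧
        (Matrix.diagonal ![a, b, 0] : Matrix (Fin 3) (Fin 3) R) = l.prod := by
  refine ⟨[!![1, 0, a - 1; 0, 1, 0; 0, 0, 0], !![1, 0, 0; 0, 1, 0; 1, 0, 0],
          !![1, 0, 0; 0, 1, b - 1; 0, 0, 0], !![1, 0, 0; 0, 1, 0; 0, 1, 0]], ?_, ?_⟩
  · intro E hE
    fin_cases hE <;>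
      · ext i j
        fin_cases i <;> fin_cases j <;>
          simp [Matrix.mul_apply, Fin.sum_univ_three, Matrix.vecHead, Matrix.vecTail]
  · simp only [List.prod_cons, List.prod_nil, mul_one]
    ext i j
    fin_cases i <;> fin_cases j <;>
      simp [Matrix.mul_apply, Fin.sum_univ_three, Matrix.vecHead, Matrix.vecTail, Matrix.diagonal, sub_mul, mul_sub]
end

section
/- Let R be a ring such that every right singular element of R (every a ∈ R whose right annihilator is nonzero, i.e., a·b = 0 for some b ≠ 0) is a product of idempotent elements of R. Then R is Dedekind finite: for all a, b ∈ R, a·b = 1 implies b·a = 1. -/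
/-! If `a * b = 1` then `a * (1 - b * a) = 0`, so `a` is right singular unless `b * a = 1`.
A product of idempotents with a right inverse is `1`, since an idempotent `e` with `e * c = 1`
satisfies `e = e * (e * c) = e * c = 1`; hence `a = 1`, and then `b = 1` as well. -/

theorem IsIdempotentElem.eq_one_of_mul_eq_one {M : Type*} [Monoid M] {e c : M}
    (he : IsIdempotentElem e) (h : e * c = 1) : e = 1 :=
  calc e = e * (e * c) := by rw [h, mul_one]
    _ = e * c := by rw [← mul_assoc, he.eq]
    _ = 1 := h

theorem List.prod_eq_one_of_isIdempotentElem_of_mul_eq_one {M : Type*} [Monoid M] :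
    ∀ {l : List M}, (∀ e ∈ l, IsIdempotentElem e) → ∀ {c : M}, l.prod * c = 1 → l.prod = 1
  | [], _, _, _ => List.prod_nil
  | e :: t, hl, c, h => by
    rw [List.prod_cons] at h ⊢
    rw [mul_assoc] at h
    have he : e = 1 := (hl e List.mem_cons_self).eq_one_of_mul_eq_one h
    rw [he, one_mul] at h ⊢
    exact prod_eq_one_of_isIdempotentElem_of_mul_eq_one
      (fun x hx => hl x (List.mem_cons_of_mem e hx)) h

/-- If every right singular element of a ring `R` is a product of idempotents,
then `R` is Dedekind finite. -/
theorem dedekindFinite_of_rightSingular_prod_idempotents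
    (R : Type*) [Ring R]
    (h : ∀ a : R, (∃ b : R, b ≠ 0 ∧ a * b = 0) →
      ∃ l : List R, (∀ e ∈ l, e * e = e) ∧ a = l.prod) :
    ∀ a b : R, a * b = 1 → b * a = 1 := by
  intro a b hab
  by_contra hba
  have hne : 1 - b * a ≠ 0 := sub_ne_zero.mpr (Ne.symm hba)
  have hsing : a * (1 - b * a) = 0 := by
    rw [mul_sub, mul_one, ← mul_assoc, hab, one_mul, sub_self]
  obtain ⟨l, hl, rfl⟩ := h a ⟨1 - b * a, hne, hsing⟩
  have ha : l.prod = 1 := List.prod_eq_one_of_isIdempotentElem_of_mul_eq_one hl hab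
  rw [ha, one_mul] at hab
  exact hba (by rw [ha, hab, one_mul])
end

section
/- Let R be a commutative Bézout domain, n a positive integer, and A ∈ Mₙ(R). Suppose there exists a nonzero row vector u ∈ Rⁿ with u·A = 0. Then there exists an invertible matrix P ∈ GLₙ(R) such that the last row of P·A·P⁻¹ is zero. -/
/-!
By Bézout, a `2 × 2` column operation of determinant one replaces two coordinates `(g p, g q)`
of a row vector (with `x p + y q = 1`) by `(g, 0)`. Composing such operations gives `Q ∈ GLₙ(R)`
with `u Q = d eₙ`, and `d ≠ 0` because `u ≠ 0`. For `P = Q⁻¹`, the last row of `P A P⁻¹` times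
`d` is `u Q (Q⁻¹ A Q) = (u A) Q = 0`, and `R` is a domain.
-/

theorem IsBezout.exists_eq_mul_and_isCoprime {R : Type*} [CommRing R] [IsDomain R] [IsBezout R]
    (a b : R) : ∃ g p q : R, a = g * p ∧ b = g * q ∧ IsCoprime p q := by
  classical
  let := IsBezout.toGCDDomain R
  obtain ⟨p, q, hp, hq, h⟩ := extract_gcd a b
  exact ⟨_, p, q, hp, hq, (gcd_isUnit_iff_isRelPrime.mp h).isCoprime⟩

namespace Matrix

variable {R ι : Type*} [CommRing R] [Fintype ι] [DecidableEq ι]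

/-- The identity matrix with the block `!![a, b; c, d]` on rows and columns `i, j`. -/
def twoByTwoBlock (i j : ι) (a b c d : R) : Matrix ι ι R :=
  (of fun l => if l = i then a • Pi.single i 1 + c • Pi.single j 1
    else if l = j then b • Pi.single i 1 + d • Pi.single j 1 else Pi.single l 1)ᵀ

theorem vecMul_twoByTwoBlock (i j : ι) (a b c d : R) (w : ι → R) :
    w ᵥ* twoByTwoBlock i j a b c d = fun l =>
      if l = i then a * w i + c * w j else if l = j then b * w i + d * w j else w l := by
  rw [twoByTwoBlock, vecMul_transpose]
  funext l
  change (if l = i then _ else _) ⬝ᵥ w = _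
  split_ifs <;> simp [add_dotProduct]

theorem twoByTwoBlock_one_zero_zero_one (i j : ι) : twoByTwoBlock i j (1 : R) 0 0 1 = 1 := by
  refine ext_iff_vecMul.mpr fun w => ?_
  rw [vecMul_twoByTwoBlock, vecMul_one]
  funext l
  split_ifs <;> simp_all

theorem twoByTwoBlock_mul_twoByTwoBlock {i j : ι} (hij : i ≠ j) (a b c d a' b' c' d' : R) :
    twoByTwoBlock i j a b c d * twoByTwoBlock i j a' b' c' d' =
      twoByTwoBlock i j (a * a' + b * c') (a * b' + b * d') (c * a' + d * c') (c * b' + d * d') := by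
  refine ext_iff_vecMul.mpr fun w => ?_
  simp only [← vecMul_vecMul, vecMul_twoByTwoBlock, if_pos, if_neg hij.symm]
  funext l
  split_ifs <;> ring

variable [IsDomain R] [IsBezout R]

theorem exists_vecMul_apply_eq_zero_of_ne {i j : ι} (hij : i ≠ j) (w : ι → R) :
    ∃ E : GL ι R, (w ᵥ* E) j = 0 ∧ ∀ k, k ≠ i → k ≠ j → (w ᵥ* E) k = w k := by
  obtain ⟨g, p, q, hp, hq, x, y, hxy⟩ := IsBezout.exists_eq_mul_and_isCoprime (w i) (w j)
  -- the block `!![x, -q; y, p]` maps `(g p, g q)` to `(g, 0)` and has inverse `!![p, q; -y, x]`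
  have hE : twoByTwoBlock i j x (-q) y p * twoByTwoBlock i j p q (-y) x = 1 := by
    rw [twoByTwoBlock_mul_twoByTwoBlock hij, ← twoByTwoBlock_one_zero_zero_one i j]
    congr 1
    · linear_combination hxy
    · ring
    · ring
    · linear_combination hxy
  refine ⟨⟨_, _, hE, mul_eq_one_comm.mp hE⟩, ?_, fun k hki hkj => ?_⟩
  · simp only [vecMul_twoByTwoBlock, if_neg hij.symm, if_pos]
    linear_combination p * hq - q * hp
  · simp [vecMul_twoByTwoBlock, hki, hkj]

theorem exists_vecMul_apply_eq_zero (w : ι → R) (i : ι) :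
    ∃ Q : GL ι R, ∀ j, j ≠ i → (w ᵥ* Q) j = 0 := by
  suffices ∀ s : Finset ι, ∃ Q : GL ι R, ∀ j ∈ s, j ≠ i → (w ᵥ* Q) j = 0 by
    simpa using this Finset.univ
  intro s
  induction s using Finset.induction_on with
  | empty => exact ⟨1, by simp⟩
  | insert j s _ ih =>
    obtain ⟨Q, hQ⟩ := ih
    by_cases hji : j = i
    · exact ⟨Q, by simpa [hji] using hQ⟩
    obtain ⟨E, hEj, hE⟩ := exists_vecMul_apply_eq_zero_of_ne (Ne.symm hji) (w ᵥ* Q)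
    refine ⟨Q * E, fun k hk hki => ?_⟩
    rw [Units.val_mul, ← vecMul_vecMul]
    rcases Finset.mem_insert.mp hk with rfl | hks
    · exact hEj
    · rw [hE k hki (by rintro rfl; contradiction), hQ k hks hki]

theorem exists_conj_row_eq_zero_of_vecMul_eq_zero (A : Matrix ι ι R) {u : ι → R} (hu : u ≠ 0)
    (huA : u ᵥ* A = 0) (i : ι) : ∃ P : GL ι R, ((P : Matrix ι ι R) * A * ((P⁻¹ : GL ι R) : Matrix ι ι R)) i = 0 := by
  obtain ⟨Q, hQ⟩ := exists_vecMul_apply_eq_zero u i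
  set d := (u ᵥ* Q) i
  have hw : u ᵥ* Q = Pi.single i d := by
    funext j
    rcases eq_or_ne j i with rfl | hj
    · simp [d]
    · simp [hj, hQ j hj]
  have hd : d ≠ 0 := by
    rintro hd
    refine hu ?_
    rw [← vecMul_one u, ← Units.mul_inv Q, ← vecMul_vecMul, hw, hd, Pi.single_zero, zero_vecMul]
  refine ⟨Q⁻¹, ?_⟩
  have : d • (((Q⁻¹ : GL ι R) : Matrix ι ι R) * A * ((Q⁻¹⁻¹ : GL ι R) : Matrix ι ι R)).row i = 0 := by
    rw [← single_vecMul, ← hw, inv_inv, vecMul_vecMul, ← mul_assoc, ← mul_assoc, Units.mul_inv,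
      one_mul, ← vecMul_vecMul, huA, zero_vecMul]
  exact (smul_eq_zero.mp this).resolve_left hd

end Matrix

/-- Over a commutative Bézout domain, a square matrix annihilated on the left by a
nonzero row vector is similar to a matrix whose last row is zero. -/
theorem exists_conjugate_with_last_row_zero_of_bezout
    (R : Type*) [CommRing R] [IsDomain R] [IsBezout R] (n : ℕ)
    (A : Matrix (Fin (n + 1)) (Fin (n + 1)) R)
    (u : Fin (n + 1) → R) (hu : u ≠ 0) (huA : Matrix.vecMul u A = 0) :
    ∃ P : GL (Fin (n + 1)) R,
      ∀ j, ((P : Matrix (Fin (n + 1)) (Fin (n + 1)) R) * A *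
        ((P⁻¹ : GL (Fin (n + 1)) R) : Matrix (Fin (n + 1)) (Fin (n + 1)) R))
          (Fin.last n) j = 0 := by
  obtain ⟨P, hP⟩ := Matrix.exists_conj_row_eq_zero_of_vecMul_eq_zero A hu huA (Fin.last n)
  exact ⟨P, congrFun hP⟩
end

section
/- Let R be a ring and a, a′, b, b′, x, d ∈ R and u a unit of R such that a + b·x = d·u, a = d·a′ and b = d·b′. Then the 2×2 matrix with first row (a, b) and second row (0, 0) can be written as E·T, where E ∈ M₂(R) is a product of idempotent matrices and T is the elementary matrix with rows (1, 0) and (−x, 1). -/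
/-- If `a + b * x = d * u` with `u` a unit, `a = d * a'` and `b = d * b'`, then the
matrix `!![a, b; 0, 0]` factors as `E * !![1, 0; -x, 1]` with `E` a product of
idempotent matrices. -/
theorem row_matrix_eq_prod_idempotents_mul_elementary
    (R : Type*) [Ring R] (a a' b b' x d : R) (u : Rˣ)
    (h1 : a + b * x = d * u) (h2 : a = d * a') (h3 : b = d * b') :
    ∃ E : Matrix (Fin 2) (Fin 2) R,
      (∃ l : List (Matrix (Fin 2) (Fin 2) R),
        (∀ F ∈ l, F * F = F) ∧ E = l.prod) ∧
      (!![a, b; 0, 0] : Matrix (Fin 2) (Fin 2) R) = E * !![1, 0; -x, 1] := by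
  set A : Matrix (Fin 2) (Fin 2) R := !![1, d * u; 0, 0] with hA
  set B : Matrix (Fin 2) (Fin 2) R := !![0, 0; 1, 1] with hB
  set C : Matrix (Fin 2) (Fin 2) R := !![1, (u⁻¹ : Rˣ) * b'; 0, 0] with hC
  refine ⟨A * B * C, ⟨[A, B, C], ?_, by simp [List.prod, mul_assoc]⟩, ?_⟩
  · intro F hF
    simp only [List.mem_cons, List.not_mem_nil, or_false] at hF
    rcases hF with rfl | rfl | rfl <;>
      · ext i j
        fin_cases i <;> fin_cases j <;> simp [hA, hB, hC, Matrix.mul_fin_two]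
  · have hABC : A * B * C = !![d * u, d * b'; 0, 0] := by
      have : (d * u) * ((u⁻¹ : Rˣ) * b') = d * b' := by
        rw [← mul_assoc, mul_assoc (d : R) (u : R), Units.mul_inv, mul_one]
      ext i j
      fin_cases i <;> fin_cases j <;> simp [hA, hB, hC, Matrix.mul_fin_two, this]
    rw [hABC]
    have ha : a = d * u - b * x := by rw [← h1, add_sub_cancel_right]
    have hb : d * b' = b := h3.symm
    ext i j
    fin_cases i <;> fin_cases j <;>
      simp [Matrix.mul_fin_two, ha, hb, sub_eq_add_neg]
end

section
/- Let R be a ring with stable range 1. Then every invertible 2×2 matrix over R is a product of elementary matrices and diagonal matrices with unit diagonal entries; i.e., every element of GL₂(R) lies in the subgroup of GL₂(R) generated by the elementary matrices I + c·eᵢⱼ (c ∈ R, i ≠ j) together with the diagonal matrices diag(u, v) with u, v units of R. -/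
/-!
The first row `(a, b)` of an invertible matrix `M` is unimodular (`a x + b y = 1`, read off from
`M M⁻¹ = 1`), so stable range 1 gives `t` with `a + b t` a unit: multiplying `M` on the right by
the elementary matrix `1 + t e₁₀` makes its `(0, 0)` entry a unit. An invertible matrix with a unit
`u` in the corner factors as lower unitriangular × `diag(u, d - c u⁻¹ b)` × upper unitriangular,
and the diagonal factor is invertible, hence has unit entries.
-/

namespace Matrix

section

variable {n R : Type*} [Fintype n] [DecidableEq n] [Ring R]

theorem one_add_single_mul_one_add_single {i j : n} (hij : i ≠ j) (c d : R) :
    (1 + single i j c) * (1 + single i j d) = 1 + single i j (c + d) := by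
  rw [mul_add, add_mul, add_mul, single_mul_single_of_ne _ _ _ _ hij.symm, single_add]
  noncomm_ring

def transvectionUnit (i j : n) (hij : i ≠ j) (c : R) : (Matrix n n R)ˣ where
  val := 1 + single i j c
  inv := 1 + single i j (-c)
  val_inv := by simp [one_add_single_mul_one_add_single hij]
  inv_val := by simp [one_add_single_mul_one_add_single hij]

theorem isUnit_of_isUnit_diagonal {v : n → R} (h : IsUnit (diagonal v)) (i : n) :
    IsUnit (v i) := by
  obtain ⟨U, hU⟩ := h
  refine isUnit_iff_exists.mpr ⟨(↑U⁻¹ : Matrix n n R) i i, ?_, ?_⟩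
  · simpa [hU, diagonal_mul] using congrFun₂ U.mul_inv i i
  · simpa [hU, mul_diagonal] using congrFun₂ U.inv_mul i i

end

variable {R : Type*} [Ring R]

theorem one_add_single_one_zero (c : R) :
    (1 + single 1 0 c : Matrix (Fin 2) (Fin 2) R) = !![1, 0; c, 1] := by
  ext i j; fin_cases i <;> fin_cases j <;> simp

theorem one_add_single_zero_one (c : R) :
    (1 + single 0 1 c : Matrix (Fin 2) (Fin 2) R) = !![1, c; 0, 1] := by
  ext i j; fin_cases i <;> fin_cases j <;> simp

theorem fin_two_eq_lower_mul_diagonal_mul_upper (u : Rˣ) (b c d : R) :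
    !![(u : R), b; c, d] =
      !![1, 0; c * ↑u⁻¹, 1] * diagonal ![(u : R), d - c * ↑u⁻¹ * b] * !![1, ↑u⁻¹ * b; 0, 1] := by
  rw [diagonal_vec2, mul_fin_two, mul_fin_two]
  ext i j; fin_cases i <;> fin_cases j <;> simp [mul_assoc]

variable (R) in
/-- Cohn's `GE₂(R)`. -/
def GE₂ : Subgroup (Matrix (Fin 2) (Fin 2) R)ˣ :=
  Subgroup.closure
    {N | (∃ (i j : Fin 2) (c : R), i ≠ j ∧ N.val = 1 + single i j c) ∨
      ∃ u v : Rˣ, N.val = diagonal ![(u : R), (v : R)]}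

theorem transvectionUnit_mem_GE₂ {i j : Fin 2} (hij : i ≠ j) (c : R) :
    transvectionUnit i j hij c ∈ GE₂ R :=
  Subgroup.subset_closure (Or.inl ⟨i, j, c, hij, rfl⟩)

theorem mem_GE₂_of_val_eq_diagonal {N : (Matrix (Fin 2) (Fin 2) R)ˣ} {x y : R}
    (hN : N.val = diagonal ![x, y]) : N ∈ GE₂ R := by
  have hdiag : IsUnit (diagonal ![x, y]) := hN ▸ N.isUnit
  exact Subgroup.subset_closure <| Or.inr
    ⟨(isUnit_of_isUnit_diagonal hdiag 0).unit, (isUnit_of_isUnit_diagonal hdiag 1).unit, hN⟩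

theorem mem_GE₂_of_isUnit_apply_zero_zero {N : (Matrix (Fin 2) (Fin 2) R)ˣ}
    (hN : IsUnit (N.val 0 0)) : N ∈ GE₂ R := by
  obtain ⟨u, hu⟩ := hN
  set L := transvectionUnit (1 : Fin 2) 0 (by decide) (N.val 1 0 * ↑u⁻¹)
  set U := transvectionUnit (0 : Fin 2) 1 (by decide) (↑u⁻¹ * N.val 0 1)
  set D := diagonal ![(u : R), N.val 1 1 - N.val 1 0 * ↑u⁻¹ * N.val 0 1]
  have hLDU : N.val = L.val * D * U.val := by
    simp only [L, U, transvectionUnit, one_add_single_one_zero, one_add_single_zero_one]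
    rw [← fin_two_eq_lower_mul_diagonal_mul_upper, hu, ← eta_fin_two]
  have hD : (L⁻¹ * N * U⁻¹).val = D := by simp [hLDU, mul_assoc]
  rw [show N = L * (L⁻¹ * N * U⁻¹) * U by group]
  exact (GE₂ R).mul_mem
    ((GE₂ R).mul_mem (transvectionUnit_mem_GE₂ _ _) (mem_GE₂_of_val_eq_diagonal hD))
    (transvectionUnit_mem_GE₂ _ _)

end Matrix

/-- Over a ring with stable range 1, every invertible `2 × 2` matrix lies in the
subgroup generated by elementary matrices and diagonal matrices with unit
diagonal entries. -/
theorem GE2_of_stableRangeOne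
    (R : Type*) [Ring R]
    (hsr : ∀ a b : R, (∃ x y : R, a * x + b * y = 1) →
      ∃ x : R, IsUnit (a + b * x)) :
    ∀ M : (Matrix (Fin 2) (Fin 2) R)ˣ,
      M ∈ Subgroup.closure
        {N : (Matrix (Fin 2) (Fin 2) R)ˣ |
          (∃ (i j : Fin 2) (c : R), i ≠ j ∧
            N.val = 1 + Matrix.single i j c) ∨
          (∃ u v : Rˣ,
            N.val = Matrix.diagonal ![(u : R), (v : R)])} := by
  intro M
  change M ∈ Matrix.GE₂ R
  have hrow : M.val 0 0 * M⁻¹.val 0 0 + M.val 0 1 * M⁻¹.val 1 0 = 1 := by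
    simpa [Matrix.mul_apply, Fin.sum_univ_two] using congrFun₂ M.mul_inv 0 0
  obtain ⟨t, ht⟩ := hsr _ _ ⟨_, _, hrow⟩
  set E := Matrix.transvectionUnit (1 : Fin 2) 0 (by decide) t
  have hME : IsUnit ((M * E).val 0 0) := by
    simpa [E, Matrix.transvectionUnit, mul_add] using ht
  rw [show M = M * E * E⁻¹ by group]
  exact (Matrix.GE₂ R).mul_mem (Matrix.mem_GE₂_of_isUnit_apply_zero_zero hME)
    ((Matrix.GE₂ R).inv_mem (Matrix.transvectionUnit_mem_GE₂ _ _))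
end

section
/- Let D be a division ring and A ∈ M₂(D) a singular matrix, i.e., there exists a nonzero column vector v ∈ D² with A·v = 0. Then A is a product of idempotent matrices. -/
open Matrix

private lemma outer_idem {D : Type*} [DivisionRing D] (u a : Fin 2 → D)
    (h : a 0 * u 0 + a 1 * u 1 = 1) :
    vecMulVec u a * vecMulVec u a = vecMulVec u a := by
  ext i j
  simp only [Matrix.mul_apply, vecMulVec_apply, Fin.sum_univ_two]
  calc u i * a 0 * (u 0 * a j) + u i * a 1 * (u 1 * a j)
      = u i * ((a 0 * u 0 + a 1 * u 1) * a j) := by noncomm_ring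
    _ = u i * a j := by rw [h, one_mul]

private lemma outer_mul {D : Type*} [DivisionRing D] (u a b w : Fin 2 → D)
    (h : a 0 * b 0 + a 1 * b 1 = 1) :
    vecMulVec u a * vecMulVec b w = vecMulVec u w := by
  ext i j
  simp only [Matrix.mul_apply, vecMulVec_apply, Fin.sum_univ_two]
  calc u i * a 0 * (b 0 * w j) + u i * a 1 * (b 1 * w j)
      = u i * ((a 0 * b 0 + a 1 * b 1) * w j) := by noncomm_ring
    _ = u i * w j := by rw [h, one_mul]

private lemma exists_ab {D : Type*} [DivisionRing D] (u w : Fin 2 → D)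
    (hu : u 0 ≠ 0 ∨ u 1 ≠ 0) (hw : w 0 ≠ 0 ∨ w 1 ≠ 0) :
    ∃ a b : Fin 2 → D, a 0 * u 0 + a 1 * u 1 = 1 ∧ w 0 * b 0 + w 1 * b 1 = 1 ∧
      a 0 * b 0 + a 1 * b 1 = 1 := by
  by_cases hu1 : u 1 = 0
  · have hu0 : u 0 ≠ 0 := by rcases hu with h | h; exact h; exact absurd hu1 h
    by_cases hw1 : w 1 = 0
    · -- u = (u0,0), w = (w0,0)
      have hw0 : w 0 ≠ 0 := by rcases hw with h | h; exact h; exact absurd hw1 h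
      refine ⟨![(u 0)⁻¹, 1], ![(w 0)⁻¹, 1 - (u 0)⁻¹ * (w 0)⁻¹], ?_, ?_, ?_⟩ <;>
        simp [hu1, hw1, inv_mul_cancel₀ hu0, mul_inv_cancel₀ hw0]
    · -- u 0 ≠ 0, w 1 ≠ 0
      refine ⟨![(u 0)⁻¹, 0], ![u 0, (w 1)⁻¹ * (1 - w 0 * u 0)], ?_, ?_, ?_⟩
      · simp [inv_mul_cancel₀ hu0]
      · simp only [Matrix.cons_val_zero, Matrix.cons_val_one, Matrix.head_cons,
          ← mul_assoc, mul_inv_cancel₀ hw1]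
        noncomm_ring
      · simp [inv_mul_cancel₀ hu0]
  · -- u 1 ≠ 0
    by_cases hw0 : w 0 = 0
    · have hw1 : w 1 ≠ 0 := by rcases hw with h | h; exact absurd hw0 h; exact h
      by_cases hu0 : u 0 = 0
      · -- u = (0,u1), w = (0,w1)
        refine ⟨![1, (u 1)⁻¹], ![1 - (u 1)⁻¹ * (w 1)⁻¹, (w 1)⁻¹], ?_, ?_, ?_⟩ <;>
          simp [hu0, hw0, inv_mul_cancel₀ hu1, mul_inv_cancel₀ hw1]
      · -- u 0 ≠ 0, w 1 ≠ 0
        refine ⟨![(u 0)⁻¹, 0], ![u 0, (w 1)⁻¹ * (1 - w 0 * u 0)], ?_, ?_, ?_⟩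
        · simp [inv_mul_cancel₀ hu0]
        · simp only [Matrix.cons_val_zero, Matrix.cons_val_one, Matrix.head_cons,
            ← mul_assoc, mul_inv_cancel₀ hw1]
          noncomm_ring
        · simp [inv_mul_cancel₀ hu0]
    · -- u 1 ≠ 0, w 0 ≠ 0
      refine ⟨![0, (u 1)⁻¹], ![(w 0)⁻¹ * (1 - w 1 * u 1), u 1], ?_, ?_, ?_⟩
      · simp [inv_mul_cancel₀ hu1]
      · simp only [Matrix.cons_val_zero, Matrix.cons_val_one, Matrix.head_cons,
          ← mul_assoc, mul_inv_cancel₀ hw0]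
        noncomm_ring
      · simp [inv_mul_cancel₀ hu1]

private lemma outer_prod_idem {D : Type*} [DivisionRing D] (u w : Fin 2 → D)
    (hw : w 0 ≠ 0 ∨ w 1 ≠ 0) :
    ∃ l : List (Matrix (Fin 2) (Fin 2) D),
      (∀ E ∈ l, E * E = E) ∧ vecMulVec u w = l.prod := by
  by_cases hu : u = 0
  · refine ⟨[0], by simp, ?_⟩
    ext i j
    simp [vecMulVec_apply, hu]
  · have hu' : u 0 ≠ 0 ∨ u 1 ≠ 0 := by
      by_contra h
      push_neg at h
      exact hu (by funext i; fin_cases i <;> simp [h.1, h.2])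
    obtain ⟨a, b, h1, h2, h3⟩ := exists_ab u w hu' hw
    refine ⟨[vecMulVec u a, vecMulVec b w], ?_, ?_⟩
    · intro E hE
      simp only [List.mem_cons, List.not_mem_nil, or_false] at hE
      rcases hE with h | h
      · rw [h]; exact outer_idem u a h1
      · rw [h]; exact outer_idem b w h2
    · simp [List.prod, outer_mul u a b w h3]

/-- Every singular `2 × 2` matrix over a division ring is a product of
idempotent matrices. -/
theorem singular_matrix_divisionRing_prod_idempotents
    (D : Type*) [DivisionRing D] (A : Matrix (Fin 2) (Fin 2) D)
    (hsing : ∃ v : Fin 2 → D, v ≠ 0 ∧ A.mulVec v = 0) :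
    ∃ l : List (Matrix (Fin 2) (Fin 2) D),
      (∀ E ∈ l, E * E = E) ∧ A = l.prod := by
  obtain ⟨v, hv, hAv⟩ := hsing
  have hmv : ∀ i, A i 0 * v 0 + A i 1 * v 1 = 0 := by
    intro i
    have := congrFun hAv i
    simpa [Matrix.mulVec, dotProduct, Fin.sum_univ_two] using this
  by_cases hv1 : v 1 = 0
  · -- then v 0 ≠ 0 and first column of A is zero
    have hv0 : v 0 ≠ 0 := by
      intro h0
      exact hv (by funext i; fin_cases i <;> simp [h0, hv1])
    have hcol : ∀ i, A i 0 = 0 := by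
      intro i
      have := hmv i
      rw [hv1, mul_zero, add_zero] at this
      exact (mul_eq_zero.mp this).resolve_right hv0
    have hA : A = vecMulVec ![A 0 1, A 1 1] ![0, 1] := by
      ext i j
      fin_cases i <;> fin_cases j <;> simp [vecMulVec_apply, hcol]
    rw [hA]
    exact outer_prod_idem _ _ (Or.inr (by simp))
  · -- v 1 ≠ 0 : second column = first column * t
    set t : D := -(v 0 * (v 1)⁻¹) with ht
    have hcol : ∀ i, A i 1 = A i 0 * t := by
      intro i
      have h := hmv i
      have : A i 1 * v 1 = -(A i 0 * v 0) := eq_neg_of_add_eq_zero_right h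
      calc A i 1 = A i 1 * v 1 * (v 1)⁻¹ := by
            rw [mul_assoc, mul_inv_cancel₀ hv1, mul_one]
        _ = -(A i 0 * v 0) * (v 1)⁻¹ := by rw [this]
        _ = A i 0 * t := by rw [ht]; noncomm_ring
    have hA : A = vecMulVec ![A 0 0, A 1 0] ![1, t] := by
      ext i j
      fin_cases i <;> fin_cases j <;> simp [vecMulVec_apply, hcol]
    rw [hA]
    exact outer_prod_idem _ _ (Or.inl (by simp))
end

section
/- Let R be a local ring (not necessarily commutative) such that every right singular 2×2 matrix over R (every A ∈ M₂(R) for which there exists B ∈ M₂(R), B ≠ 0, with A·B = 0) is a product of idempotent matrices. Then R is a domain: for all a, b ∈ R, a·b = 0 implies a = 0 or b = 0. -/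
/-!
Over a local ring every idempotent `2 × 2` matrix `E` is either `1` or an outer product `c rᵀ`:
pivoting on a unit diagonal entry of `E` (or, if there is none, of `1 - E`) leaves a Schur
complement that is an idempotent scalar, hence `0` or `1`. Outer products absorb multiplication
on the right, so every product of idempotents is `1` or an outer product. If `a * b = 0` with
`a, b ≠ 0`, then `diag(1, a)` annihilates `diag(0, b)`, yet it is neither `1` nor an outer
product, because local rings are Dedekind-finite.
-/

open Matrix

namespace IsLocalRing

variable {R : Type*} [Ring R] [IsLocalRing R]

theorem eq_zero_or_eq_one_of_isIdempotentElem {e : R} (he : IsIdempotentElem e) :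
    e = 0 ∨ e = 1 := by
  rcases isUnit_or_isUnit_of_add_one (add_sub_cancel e 1) with hu | hu
  · exact Or.inr ((IsIdempotentElem.iff_eq_one_of_isUnit hu).mp he)
  · exact Or.inl (sub_eq_self.mp ((IsIdempotentElem.iff_eq_one_of_isUnit hu).mp he.one_sub))

instance isDedekindFiniteMonoid : IsDedekindFiniteMonoid R where
  mul_eq_one_symm {x y} hxy := by
    have hyx : IsIdempotentElem (y * x) := by
      rw [IsIdempotentElem, mul_assoc, ← mul_assoc x, hxy, one_mul]
    refine (eq_zero_or_eq_one_of_isIdempotentElem hyx).resolve_left fun h0 => ?_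
    refine one_ne_zero (α := R) ?_
    calc (1 : R) = x * (y * x) * y := by rw [← mul_assoc, hxy, one_mul, hxy]
      _ = 0 := by rw [h0, mul_zero, zero_mul]

end IsLocalRing

namespace Matrix

variable {l m n R : Type*}

def IsOuterProduct [Mul R] (A : Matrix m n R) : Prop :=
  ∃ c r, A = vecMulVec c r

theorem isOuterProduct_zero [MulZeroClass R] : IsOuterProduct (0 : Matrix m n R) :=
  ⟨0, 0, (zero_vecMulVec 0).symm⟩

theorem IsOuterProduct.submatrix [Mul R] {A : Matrix m n R} (hA : IsOuterProduct A)
    (σ : l → m) (τ : l → n) : IsOuterProduct (A.submatrix σ τ) := by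
  obtain ⟨c, r, rfl⟩ := hA
  exact ⟨c ∘ σ, r ∘ τ, rfl⟩

theorem IsOuterProduct.mul_right [NonUnitalSemiring R] [Fintype m] {A : Matrix m m R}
    (hA : IsOuterProduct A) (M : Matrix m l R) : IsOuterProduct (A * M) := by
  obtain ⟨c, r, rfl⟩ := hA
  exact ⟨c, r ᵥ* M, vecMulVec_mul c r M⟩

theorem eq_zero_of_isOuterProduct_fin_two [MonoidWithZero R] [IsDedekindFiniteMonoid R] {a : R}
    (ha : IsOuterProduct !![1, 0; 0, a]) : a = 0 := by
  obtain ⟨c, r, hcr⟩ := ha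
  have h00 : c 0 * r 0 = 1 := by simpa [vecMulVec_apply] using (congr_fun₂ hcr 0 0).symm
  have h10 : c 1 * r 0 = 0 := by simpa [vecMulVec_apply] using (congr_fun₂ hcr 1 0).symm
  have h11 : a = c 1 * r 1 := by simpa [vecMulVec_apply] using congr_fun₂ hcr 1 1
  have hc1 : c 1 = 0 := (isUnit_of_mul_isUnit_right (h00 ▸ isUnit_one)).mul_left_eq_zero.mp h10
  rw [h11, hc1, zero_mul]

theorem isIdempotentElem_fin_two_iff [Semiring R] {a b c d : R} :
    IsIdempotentElem !![a, b; c, d] ↔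
      a * a + b * c = a ∧ a * b + b * d = b ∧ c * a + d * c = c ∧ c * b + d * d = d := by
  simp [IsIdempotentElem, and_assoc]

section IsLocalRing

variable [Ring R] [IsLocalRing R] {E : Matrix (Fin 2) (Fin 2) R}

theorem eq_one_or_isOuterProduct_of_isUnit_apply_zero_zero (hE : IsIdempotentElem E)
    (he : IsUnit (E 0 0)) : E = 1 ∨ IsOuterProduct E := by
  obtain ⟨u, hu⟩ := he
  have hE_eq : E = !![↑u, ↑u * (↑u⁻¹ * E 0 1); E 1 0, E 1 1] := by
    rw [Units.mul_inv_cancel_left, hu]; exact eta_fin_two E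
  rw [hE_eq] at hE ⊢
  generalize ↑u⁻¹ * E 0 1 = f, E 1 0 = g, E 1 1 = h at hE ⊢
  obtain ⟨q₁, q₂, q₃, q₄⟩ := isIdempotentElem_fin_two_iff.mp hE
  have d₁ : ↑u + f * g = 1 :=
    u.isUnit.mul_left_cancel (by linear_combination (norm := noncomm_ring) q₁)
  have d₂ : ↑u * f + f * h = f :=
    u.isUnit.mul_left_cancel (by linear_combination (norm := noncomm_ring) q₂)
  -- the Schur complement of the pivot is an idempotent of `R`, hence `0` or `1`
  have hs : IsIdempotentElem (h - g * f) := by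
    unfold IsIdempotentElem
    linear_combination (norm := noncomm_ring) q₄ - q₃ * f - g * d₂ + g * d₁ * f
  rcases IsLocalRing.eq_zero_or_eq_one_of_isIdempotentElem hs with hs | hs
  · right
    refine ⟨![↑u, g], ![1, f], ?_⟩
    rw [sub_eq_zero] at hs
    ext i j; fin_cases i <;> fin_cases j <;> simp [hs, vecMulVec_apply]
  · left
    have hg : g = 0 := by linear_combination (norm := noncomm_ring) q₃ - g * d₁ - hs * g
    subst hg
    obtain rfl : h = 1 := by simpa using hs
    obtain rfl : f = 0 := u.isUnit.mul_right_eq_zero.mp (by simpa using d₂)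
    obtain hu : (u : R) = 1 := by simpa using d₁
    rw [hu, one_fin_two, mul_zero]

theorem eq_one_or_isOuterProduct_of_isUnit_apply_one_one (hE : IsIdempotentElem E)
    (he : IsUnit (E 1 1)) : E = 1 ∨ IsOuterProduct E := by
  let σ := Equiv.swap (0 : Fin 2) 1
  have hσE : IsIdempotentElem (E.submatrix σ σ) := by
    rw [IsIdempotentElem, submatrix_mul_equiv, hE.eq]
  have hσσE : (E.submatrix σ σ).submatrix σ σ = E := by ext i j; simp [σ]
  rcases eq_one_or_isOuterProduct_of_isUnit_apply_zero_zero hσE (by simpa [σ] using he) with h | h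
  · left; rw [← hσσE, h, submatrix_one_equiv]
  · right; rw [← hσσE]; exact h.submatrix σ σ

theorem isUnit_apply_zero_zero_or_isUnit_apply_one_one_of_isUnit_apply_one_zero
    (hE : IsIdempotentElem E) (hg : IsUnit (E 1 0)) : IsUnit (E 0 0) ∨ IsUnit (E 1 1) := by
  obtain ⟨w, hw⟩ := hg
  have q : ↑w * E 0 0 + E 1 1 * ↑w = ↑w := by
    simpa [mul_apply, Fin.sum_univ_two, ← hw] using congr_fun₂ hE.eq 1 0
  have hsum : E 0 0 + ↑w⁻¹ * E 1 1 * ↑w = 1 := by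
    simpa [mul_add, mul_assoc] using congr_arg ((↑w⁻¹ : R) * ·) q
  refine (IsLocalRing.isUnit_or_isUnit_of_add_one hsum).imp id fun h => ?_
  exact (Units.isUnit_units_mul _ _).mp ((Units.isUnit_mul_units _ _).mp h)

theorem eq_one_or_isOuterProduct_of_isIdempotentElem (hE : IsIdempotentElem E) :
    E = 1 ∨ IsOuterProduct E := by
  by_cases h₀ : IsUnit (E 0 0)
  · exact eq_one_or_isOuterProduct_of_isUnit_apply_zero_zero hE h₀
  by_cases h₁ : IsUnit (E 1 1)
  · exact eq_one_or_isOuterProduct_of_isUnit_apply_one_one hE h₁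
  have h₀' : IsUnit (1 - E 0 0) :=
    (IsLocalRing.isUnit_or_isUnit_of_add_one (add_sub_cancel _ 1)).resolve_left h₀
  have h₁' : IsUnit (1 - E 1 1) :=
    (IsLocalRing.isUnit_or_isUnit_of_add_one (add_sub_cancel _ 1)).resolve_left h₁
  rcases eq_one_or_isOuterProduct_of_isUnit_apply_zero_zero hE.one_sub (by simpa using h₀') with
    h | ⟨c, r, hcr⟩
  · right; rw [sub_eq_self.mp h]; exact isOuterProduct_zero
  exfalso
  have e₀₀ : 1 - E 0 0 = c 0 * r 0 := by simpa [vecMulVec_apply] using congr_fun₂ hcr 0 0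
  have e₁₁ : 1 - E 1 1 = c 1 * r 1 := by simpa [vecMulVec_apply] using congr_fun₂ hcr 1 1
  have e₁₀ : -E 1 0 = c 1 * r 0 := by simpa [vecMulVec_apply] using congr_fun₂ hcr 1 0
  have hg : IsUnit (E 1 0) := by
    rw [← IsUnit.neg_iff, e₁₀]
    exact (isUnit_of_mul_isUnit_left (e₁₁ ▸ h₁')).mul (isUnit_of_mul_isUnit_right (e₀₀ ▸ h₀'))
  exact (isUnit_apply_zero_zero_or_isUnit_apply_one_one_of_isUnit_apply_one_zero hE hg).elim h₀ h₁

theorem prod_eq_one_or_isOuterProduct {L : List (Matrix (Fin 2) (Fin 2) R)}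
    (hL : ∀ E ∈ L, IsIdempotentElem E) : L.prod = 1 ∨ IsOuterProduct L.prod := by
  refine L.prod_induction _ (fun A B hA _ => ?_) (Or.inl rfl)
    fun E hE => eq_one_or_isOuterProduct_of_isIdempotentElem (hL E hE)
  rcases hA with rfl | hA
  · rwa [one_mul]
  · exact Or.inr (hA.mul_right B)

end IsLocalRing

end Matrix

/-- If `R` is a local ring (not necessarily commutative) in which every right
singular `2 × 2` matrix is a product of idempotent matrices, then `R` is a
domain. -/
theorem isDomain_of_localRing_rightSingular_prod_idempotents
    (R : Type*) [Ring R] [Nontrivial R]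
    (hloc : ∀ a b : R, a + b = 1 → IsUnit a ∨ IsUnit b)
    (h : ∀ A : Matrix (Fin 2) (Fin 2) R,
      (∃ B : Matrix (Fin 2) (Fin 2) R, B ≠ 0 ∧ A * B = 0) →
      ∃ l : List (Matrix (Fin 2) (Fin 2) R), (∀ E ∈ l, E * E = E) ∧ A = l.prod) :
    ∀ a b : R, a * b = 0 → a = 0 ∨ b = 0 := by
  have : IsLocalRing R := ⟨fun {a b} => hloc a b⟩
  intro a b hab
  by_contra! hne
  have hsing : !![1, 0; 0, a] * !![0, 0; 0, b] = 0 := by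
    rw [mul_fin_two]; simp [hab, ← Matrix.ext_iff, Fin.forall_fin_two]
  obtain ⟨l, hl, hA⟩ := h _ ⟨_, by simpa [← Matrix.ext_iff] using hne.2, hsing⟩
  rcases prod_eq_one_or_isOuterProduct hl with h1 | h1
  · have ha : a = 1 := by simpa using congr_fun₂ (hA.trans h1) 1 1
    exact hne.2 (by simpa [ha] using hab)
  · exact hne.1 (eq_zero_of_isOuterProduct_fin_two (hA ▸ h1))
end

section
/- Let R be a commutative local domain whose maximal ideal is principal, generated by g ∈ R, and suppose the intersection of the powers of the maximal ideal is zero: ⋂ₙ (g)ⁿ = (0). Then every 2×2 matrix A over R with a nonzero left annihilator (there exists B ∈ M₂(R), B ≠ 0, with B·A = 0) is a product of idempotent matrices. -/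
/-- In a local domain with principal maximal ideal `(g)` and `⋂ₙ (g)ⁿ = 0`,
every nonzero element is a unit times a power of `g`. -/
lemma aux_unit_pow (R : Type*) [CommRing R] [IsDomain R] [IsLocalRing R] (g : R)
    (hg : IsLocalRing.maximalIdeal R = Ideal.span {g})
    (hsep : (⨅ n : ℕ, Ideal.span ({g} : Set R) ^ (n + 1)) = ⊥)
    (x : R) (hx : x ≠ 0) : ∃ (n : ℕ) (u : R), IsUnit u ∧ x = u * g ^ n := by
  classical
  have unit_of_not_mem : ∀ y : R, y ∉ Ideal.span ({g} : Set R) → IsUnit y := by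
    intro y hy
    by_contra hyu
    exact hy (hg ▸ (IsLocalRing.mem_maximalIdeal y).mpr hyu)
  have hP : ∃ n : ℕ, x ∉ Ideal.span ({g} : Set R) ^ (n + 1) := by
    by_contra h
    push_neg at h
    have hx' : x ∈ (⨅ n : ℕ, Ideal.span ({g} : Set R) ^ (n + 1)) := Ideal.mem_iInf.mpr h
    rw [hsep] at hx'
    exact hx ((Submodule.mem_bot R).mp hx')
  have hnot : x ∉ Ideal.span ({g} : Set R) ^ (Nat.find hP + 1) := Nat.find_spec hP
  rcases Nat.eq_zero_or_eq_succ_pred (Nat.find hP) with h0 | hsucc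
  · refine ⟨0, x, ?_, by ring⟩
    apply unit_of_not_mem
    rw [h0] at hnot
    simpa using hnot
  · set k := Nat.find hP - 1 with hk
    have hmem : x ∈ Ideal.span ({g} : Set R) ^ (k + 1) := by
      by_contra h
      have := Nat.find_min hP (m := k) (by omega)
      exact this h
    rw [Ideal.span_singleton_pow, Ideal.mem_span_singleton] at hmem
    obtain ⟨y, hy⟩ := hmem
    refine ⟨k + 1, y, ?_, by rw [hy]; ring⟩
    apply unit_of_not_mem
    intro hyg
    rw [Ideal.mem_span_singleton] at hyg
    obtain ⟨z, hz⟩ := hyg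
    apply hnot
    have hfind : Nat.find hP + 1 = k + 2 := by omega
    rw [hfind, Ideal.span_singleton_pow, Ideal.mem_span_singleton]
    exact ⟨z, by rw [hy, hz]; ring⟩

/-- Divisibility is total in such a ring. -/
lemma aux_dvd_total (R : Type*) [CommRing R] [IsDomain R]
    (g : R)
    (hup : ∀ x : R, x ≠ 0 → ∃ (n : ℕ) (u : R), IsUnit u ∧ x = u * g ^ n)
    (a b : R) : a ∣ b ∨ b ∣ a := by
  by_cases ha : a = 0
  · exact Or.inr ⟨0, by rw [ha, mul_zero]⟩
  by_cases hb : b = 0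
  · exact Or.inl ⟨0, by rw [hb, mul_zero]⟩
  obtain ⟨m, u, hu, hau⟩ := hup a ha
  obtain ⟨n, v, hv, hbv⟩ := hup b hb
  rcases le_total m n with hmn | hnm
  · refine Or.inl ⟨↑hu.unit⁻¹ * (v * g ^ (n - m)), ?_⟩
    have hgm : g ^ m * g ^ (n - m) = g ^ n := by rw [← pow_add]; congr 1; omega
    calc b = v * g ^ n := hbv
      _ = (u * ↑hu.unit⁻¹) * (v * (g ^ m * g ^ (n - m))) := by
          rw [hgm, hu.mul_val_inv, one_mul]
      _ = a * (↑hu.unit⁻¹ * (v * g ^ (n - m))) := by rw [hau]; ring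
  · refine Or.inr ⟨↑hv.unit⁻¹ * (u * g ^ (m - n)), ?_⟩
    have hgm : g ^ n * g ^ (m - n) = g ^ m := by rw [← pow_add]; congr 1; omega
    calc a = u * g ^ m := hau
      _ = (v * ↑hv.unit⁻¹) * (u * (g ^ n * g ^ (m - n))) := by
          rw [hgm, hv.mul_val_inv, one_mul]
      _ = b * (↑hv.unit⁻¹ * (u * g ^ (m - n))) := by rw [hbv]; ring

/-- A matrix with zero bottom row factors into idempotents (given totality of dvd). -/
lemma aux_top_row (R : Type*) [CommRing R]
    (hdvd : ∀ a b : R, a ∣ b ∨ b ∣ a) (a b : R) :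
    ∃ l : List (Matrix (Fin 2) (Fin 2) R),
      (∀ E ∈ l, E * E = E) ∧ (!![a, b; 0, 0] : Matrix (Fin 2) (Fin 2) R) = l.prod := by
  rcases hdvd a b with ⟨q, hq⟩ | ⟨q, hq⟩
  · -- b = a * q
    refine ⟨[!![1, a; 0, 0], !![0, 0; 1, 1], !![1, q; 0, 0]], ?_, ?_⟩
    · intro E hE
      fin_cases hE <;> ext i j <;> fin_cases i <;> fin_cases j <;>
        simp [Matrix.mul_apply, Fin.sum_univ_two]
    · simp only [List.prod_cons, List.prod_nil, mul_one]
      ext i j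
      fin_cases i <;> fin_cases j <;>
        simp [Matrix.mul_apply, Fin.sum_univ_two, hq]
  · -- a = b * q
    refine ⟨[!![1, b; 0, 0], !![0, 0; q, 1]], ?_, ?_⟩
    · intro E hE
      fin_cases hE <;> ext i j <;> fin_cases i <;> fin_cases j <;>
        simp [Matrix.mul_apply, Fin.sum_univ_two]
    · simp only [List.prod_cons, List.prod_nil, mul_one]
      ext i j
      fin_cases i <;> fin_cases j <;>
        simp [Matrix.mul_apply, Fin.sum_univ_two, hq, mul_comm]
/-- A matrix with zero top row factors into idempotents (given totality of dvd). -/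
lemma aux_bot_row (R : Type*) [CommRing R]
    (hdvd : ∀ a b : R, a ∣ b ∨ b ∣ a) (a b : R) :
    ∃ l : List (Matrix (Fin 2) (Fin 2) R),
      (∀ E ∈ l, E * E = E) ∧ (!![0, 0; a, b] : Matrix (Fin 2) (Fin 2) R) = l.prod := by
  rcases hdvd a b with ⟨q, hq⟩ | ⟨q, hq⟩
  · -- b = a * q
    refine ⟨[!![0, 0; a, 1], !![1, q; 0, 0]], ?_, ?_⟩
    · intro E hE
      fin_cases hE <;> ext i j <;> fin_cases i <;> fin_cases j <;>
        simp [Matrix.mul_apply, Fin.sum_univ_two]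
    · simp only [List.prod_cons, List.prod_nil, mul_one]
      ext i j
      fin_cases i <;> fin_cases j <;>
        simp [Matrix.mul_apply, Fin.sum_univ_two, hq]
  · -- a = b * q
    refine ⟨[!![0, 0; b, 1], !![1, 1; 0, 0], !![0, 0; q, 1]], ?_, ?_⟩
    · intro E hE
      fin_cases hE <;> ext i j <;> fin_cases i <;> fin_cases j <;>
        simp [Matrix.mul_apply, Fin.sum_univ_two]
    · simp only [List.prod_cons, List.prod_nil, mul_one]
      ext i j
      fin_cases i <;> fin_cases j <;>
        simp [Matrix.mul_apply, Fin.sum_univ_two, hq, mul_comm]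

/-- Let `R` be a commutative local domain whose maximal ideal is principal,
generated by `g`, with `⋂ₙ (g)ⁿ = 0`. Then every `2 × 2` matrix over `R` with a
nonzero left annihilator is a product of idempotent matrices. -/
theorem prod_idempotents_of_local_domain_principal_maximalIdeal
    (R : Type*) [CommRing R] [IsDomain R] [IsLocalRing R] (g : R)
    (hg : IsLocalRing.maximalIdeal R = Ideal.span {g})
    (hsep : (⨅ n : ℕ, Ideal.span ({g} : Set R) ^ (n + 1)) = ⊥)
    (A : Matrix (Fin 2) (Fin 2) R)
    (hA : ∃ B : Matrix (Fin 2) (Fin 2) R, B ≠ 0 ∧ B * A = 0) :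
    ∃ l : List (Matrix (Fin 2) (Fin 2) R),
      (∀ E ∈ l, E * E = E) ∧ A = l.prod := by
  classical
  obtain ⟨B, hB0, hBA⟩ := hA
  have hdvd : ∀ a b : R, a ∣ b ∨ b ∣ a :=
    aux_dvd_total R g (aux_unit_pow R g hg hsep)
  have hex : ∃ i j, B i j ≠ 0 := by
    by_contra h
    push_neg at h
    apply hB0
    ext i j
    simpa using h i j
  obtain ⟨i, j, hij⟩ := hex
  have hrow : ∀ j' : Fin 2, B i 0 * A 0 j' + B i 1 * A 1 j' = 0 := by
    intro j'
    have h := congrFun (congrFun hBA i) j'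
    simpa [Matrix.mul_apply, Fin.sum_univ_two] using h
  rcases hdvd (B i 0) (B i 1) with ⟨c, hc⟩ | ⟨c, hc⟩
  · -- B i 1 = B i 0 * c ; row 0 of A is a multiple of row 1
    have hb0 : B i 0 ≠ 0 := by
      intro h0
      apply hij
      have h1 : B i 1 = 0 := by rw [hc, h0, zero_mul]
      fin_cases j <;> simp [h0, h1]
    have hA0 : ∀ j', A 0 j' = -c * A 1 j' := by
      intro j'
      have h := hrow j'
      rw [hc] at h
      have h2 : B i 0 * (A 0 j' + c * A 1 j') = 0 := by linear_combination h
      rcases mul_eq_zero.mp h2 with h' | h'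
      · exact absurd h' hb0
      · linear_combination h'
    obtain ⟨l, hl, hprod⟩ := aux_bot_row R hdvd (A 1 0) (A 1 1)
    refine ⟨!![0, -c; 0, 1] :: l, ?_, ?_⟩
    · intro E hE
      rcases List.mem_cons.mp hE with rfl | hE
      · ext i' j'
        fin_cases i' <;> fin_cases j' <;> simp [Matrix.mul_apply, Fin.sum_univ_two]
      · exact hl E hE
    · rw [List.prod_cons, ← hprod]
      ext i' j'
      fin_cases i' <;> fin_cases j' <;>
        simp [Matrix.mul_apply, Fin.sum_univ_two, hA0]
  · -- B i 0 = B i 1 * c ; row 1 of A is a multiple of row 0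
    have hb1 : B i 1 ≠ 0 := by
      intro h0
      apply hij
      have h1 : B i 0 = 0 := by rw [hc, h0, zero_mul]
      fin_cases j <;> simp [h0, h1]
    have hA1 : ∀ j', A 1 j' = -c * A 0 j' := by
      intro j'
      have h := hrow j'
      rw [hc] at h
      have h2 : B i 1 * (A 1 j' + c * A 0 j') = 0 := by linear_combination h
      rcases mul_eq_zero.mp h2 with h' | h'
      · exact absurd h' hb1
      · linear_combination h'
    obtain ⟨l, hl, hprod⟩ := aux_top_row R hdvd (A 0 0) (A 0 1)
    refine ⟨!![1, 0; -c, 0] :: l, ?_, ?_⟩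
    · intro E hE
      rcases List.mem_cons.mp hE with rfl | hE
      · ext i' j'
        fin_cases i' <;> fin_cases j' <;> simp [Matrix.mul_apply, Fin.sum_univ_two]
      · exact hl E hE
    · rw [List.prod_cons, ← hprod]
      ext i' j'
      fin_cases i' <;> fin_cases j' <;>
        simp [Matrix.mul_apply, Fin.sum_univ_two, hA1]
end

section
/- Let R be a ring, a, b ∈ R, and u a unit of R. Then the 2×2 matrix with first row (a·b + u, a) and second row (0, 0) is a product of idempotent matrices. -/
/-- For any ring `R`, `a b : R` and unit `u`, the matrix `!![a*b + u, a; 0, 0]`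
is a product of idempotent matrices. -/
theorem matrix_ab_add_unit_prod_idempotents
    (R : Type*) [Ring R] (a b : R) (u : Rˣ) :
    ∃ l : List (Matrix (Fin 2) (Fin 2) R),
      (∀ E ∈ l, E * E = E) ∧
        (!![a * b + u, a; 0, 0] : Matrix (Fin 2) (Fin 2) R) = l.prod := by
  refine ⟨[!![1, (u : R) - 1; 0, 0], !![1, 0; 1, 0],
      !![(↑u⁻¹ : R) * a * b + 1, (↑u⁻¹ : R) * a;
         -(b * ((↑u⁻¹ : R) * a * b + 1)), -(b * ((↑u⁻¹ : R) * a))]], ?_, ?_⟩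
  · intro E hE
    simp only [List.mem_cons, List.not_mem_nil, or_false] at hE
    rcases hE with h | h | h <;> subst h <;>
      ext i j <;> fin_cases i <;> fin_cases j <;>
      simp [Matrix.mul_apply, Fin.sum_univ_two] <;> noncomm_ring
  · ext i j
    fin_cases i <;> fin_cases j <;>
      simp [Matrix.mul_apply, Fin.sum_univ_two, mul_add, mul_sub, sub_mul, add_mul,
        ← mul_assoc, Units.mul_inv_cancel_right, Units.mul_inv] <;> noncomm_ring
end

section
/- Let R be a ring and a, b ∈ R. If there exists x ∈ R such that a + b·x is a unit of R, then the 2×2 matrix with first row (a, b) and second row (0, 0) is a product of idempotent matrices. -/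
/-- If there is `x` with `a + b * x` a unit, then `!![a, b; 0, 0]` is a product
of idempotent matrices. -/
theorem matrix_row_prod_idempotents_of_isUnit
    (R : Type*) [Ring R] (a b : R) (hx : ∃ x : R, IsUnit (a + b * x)) :
    ∃ l : List (Matrix (Fin 2) (Fin 2) R),
      (∀ E ∈ l, E * E = E) ∧
        (!![a, b; 0, 0] : Matrix (Fin 2) (Fin 2) R) = l.prod := by
  obtain ⟨x, hab⟩ := hx
  obtain ⟨u, hu⟩ := hab
  set c : R := (↑u⁻¹ : R) * a with hc
  set d : R := (↑u⁻¹ : R) * b with hd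
  have hcd : c + d * x = 1 := by
    have h : (↑u⁻¹ : R) * ↑u = 1 := u.inv_mul
    rw [hu, mul_add, ← mul_assoc (↑u⁻¹ : R) b x] at h
    rw [hc, hd]
    exact h
  have e11 : c * c + d * (x * c) = c := by
    rw [← mul_assoc d x c, ← add_mul, hcd, one_mul]
  have e12 : c * d + d * (x * d) = d := by
    rw [← mul_assoc d x d, ← add_mul, hcd, one_mul]
  have huc : (↑u : R) * c = a := by rw [hc, ← mul_assoc, u.mul_inv, one_mul]
  have hud : (↑u : R) * d = b := by rw [hd, ← mul_assoc, u.mul_inv, one_mul]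
  refine ⟨[!![1, ↑u; 0, 0], !![0, 0; 1, 1], !![1, 0; 0, 0],
      !![c, d; x * c, x * d]], ?_, ?_⟩
  · intro E hE
    simp only [List.mem_cons, List.not_mem_nil, or_false] at hE
    rcases hE with rfl | rfl | rfl | rfl
    · ext i j; fin_cases i <;> fin_cases j <;>
        simp [Matrix.mul_apply, Fin.sum_univ_two]
    · ext i j; fin_cases i <;> fin_cases j <;>
        simp [Matrix.mul_apply, Fin.sum_univ_two]
    · ext i j; fin_cases i <;> fin_cases j <;>
        simp [Matrix.mul_apply, Fin.sum_univ_two]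
    · rw [Matrix.mul_fin_two, mul_assoc x c c, mul_assoc x d (x * c),
        ← mul_add x, mul_assoc x c d, mul_assoc x d (x * d), ← mul_add x,
        e11, e12]
  · simp only [List.prod_cons, List.prod_nil, mul_one]
    rw [Matrix.mul_fin_two, Matrix.mul_fin_two, Matrix.mul_fin_two]
    simp only [one_mul, mul_one, zero_mul, mul_zero, add_zero, zero_add]
    rw [huc, hud]
end

section
/- Let R be a domain (not necessarily commutative) and let a, b be nonzero elements of R such that a·R + b·R = R (i.e., a·x + b·y = 1 for some x, y ∈ R). Then the following are equivalent: (i) there exist an integer n > 0 and elements a₁, …, aₙ, b₁, …, bₙ, c₁, …, cₙ, d₁, …, dₙ of R with a₁ = c₁ = 1, b₁ = 0, cₙ = a, dₙ = b, cᵢ·aᵢ + dᵢ·bᵢ = 1 for 1 ≤ i ≤ n, and cᵢ·aᵢ₊₁ + dᵢ·bᵢ₊₁ = 1 for 1 ≤ i ≤ n−1; (ii) there exist an integer n > 0 and elements aᵢ, bᵢ, cᵢ, dᵢ ∈ R (1 ≤ i ≤ n) such that the 2×2 matrix with rows (a, b) and (0, 0) equals the product E₁ ⋯ Eₙ, where each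 Eᵢ is the idempotent matrix (Eᵢ² = Eᵢ) with rows (aᵢ·cᵢ, aᵢ·dᵢ) and (bᵢ·cᵢ, bᵢ·dᵢ). -/
/-!
Writing `uᵢ = (aᵢ, bᵢ)ᵗ` and `vᵢ = (cᵢ, dᵢ)`, a product of rank-one matrices telescopes:
`u₁v₁ ⋯ uₙvₙ = u₁ (t₁ ⋯ tₙ₋₁) vₙ` with links `tᵢ = vᵢ uᵢ₊₁`, and `uv` is idempotent when `vu = 1`.
This gives the factorization from a chain. Conversely, over a domain a nonzero idempotent `uv`
has `vu = 1`, and comaximality of `a, b` makes `p = a₁ t₁ ⋯ tₙ₋₁` right invertible, hence a unit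
(domains are Dedekind-finite), and so are its prefixes `pᵢ = a₁ t₁ ⋯ tᵢ₋₁`. Replacing `uᵢ, vᵢ` by
`uᵢ pᵢ⁻¹, pᵢ vᵢ` leaves every factor unchanged and turns every link into `1`.
-/

open Matrix
open scoped Ring

namespace Matrix

variable {ι R : Type*} [Fintype ι]

theorem prod_map_range_succ_vecMulVec [DecidableEq ι] [Semiring R] (u v : ℕ → ι → R) (m : ℕ) :
    ((List.range (m + 1)).map fun i => vecMulVec (u i) (v i)).prod =
      vecMulVec (u 0) (((List.range m).map fun i => v i ⬝ᵥ u (i + 1)).prod • v m) := by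
  induction m with
  | zero => simp
  | succ m ih =>
    rw [List.range_succ, List.map_append, List.prod_append, ih, List.map_singleton,
      List.prod_singleton, vecMulVec_mul_vecMulVec, smul_dotProduct, smul_eq_mul,
      List.range_succ (n := m), List.map_append, List.prod_append, List.map_singleton,
      List.prod_singleton]

theorem isIdempotentElem_vecMulVec [Semiring R] {w v : ι → R} (h : v ⬝ᵥ w = 1) :
    IsIdempotentElem (vecMulVec w v) := by
  rw [IsIdempotentElem, vecMulVec_mul_vecMulVec, h, one_smul]

theorem isIdempotentElem_vecMulVec_iff [Ring R] [NoZeroDivisors R] {w v : ι → R} :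
    IsIdempotentElem (vecMulVec w v) ↔ v ⬝ᵥ w = 1 ∨ vecMulVec w v = 0 := by
  have : vecMulVec w v * vecMulVec w v - vecMulVec w v = vecMulVec w ((v ⬝ᵥ w - 1) • v) := by
    rw [vecMulVec_mul_vecMulVec, sub_smul, one_smul, vecMulVec_sub]
  rw [IsIdempotentElem, ← sub_eq_zero, this, vecMulVec_eq_zero, smul_eq_zero, sub_eq_zero,
    vecMulVec_eq_zero]
  tauto

theorem dotProduct_eq_one_of_prod_ne_zero [Ring R] [NoZeroDivisors R] [DecidableEq ι]
    {u v : ℕ → ι → R} {n : ℕ} (hidem : ∀ i < n, IsIdempotentElem (vecMulVec (u i) (v i)))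
    (hprod : ((List.range n).map fun i => vecMulVec (u i) (v i)).prod ≠ 0) {i : ℕ} (hi : i < n) :
    v i ⬝ᵥ u i = 1 :=
  (isIdempotentElem_vecMulVec_iff.1 (hidem i hi)).resolve_right fun h0 =>
    hprod (List.prod_eq_zero (List.mem_map.2 ⟨i, List.mem_range.2 hi, h0⟩))

theorem mul_dotProduct_eq_one_of_vecMulVec_eq [Ring R] [IsDomain R] {r r' w z : Fin 2 → R}
    (h : vecMulVec ![1, 0] r = vecMulVec w r') (hz : r ⬝ᵥ z = 1) :
    w 0 * (r' ⬝ᵥ z) = 1 ∧ w 1 = 0 := by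
  have hmul := congrArg (· *ᵥ z) h
  simp only [vecMulVec_mulVec, hz] at hmul
  have h0 : w 0 * (r' ⬝ᵥ z) = 1 := by simpa using (congrFun hmul 0).symm
  have h1 : w 1 * (r' ⬝ᵥ z) = 0 := by simpa using (congrFun hmul 1).symm
  exact ⟨h0, (mul_eq_zero.1 h1).resolve_right (right_ne_zero_of_mul_eq_one h0)⟩

theorem vecMulVec_fin_two [Mul R] (p q r s : R) :
    vecMulVec ![p, q] ![r, s] = !![p * r, p * s; q * r, q * s] := by
  ext i j
  fin_cases i <;> fin_cases j <;> rfl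

end Matrix

theorem isUnit_of_le_of_mul_eq_succ {M : Type*} [Monoid M] [IsDedekindFiniteMonoid M]
    {p t : ℕ → M} {m : ℕ} (hstep : ∀ i < m, p i * t i = p (i + 1)) (hm : IsUnit (p m))
    {i : ℕ} (hi : i ≤ m) : IsUnit (p i) := by
  induction hi using Nat.decreasingInduction with
  | self => exact hm
  | of_succ k hk ih => exact isUnit_of_mul_isUnit_left (hstep k hk ▸ ih)

structure IsUnimodularChain {R : Type*} [Ring R] (a b : R) (n : ℕ) (A B C D : ℕ → R) :
    Prop where
  A_zero : A 0 = 1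
  C_zero : C 0 = 1
  B_zero : B 0 = 0
  C_last : C (n - 1) = a
  D_last : D (n - 1) = b
  unimodular : ∀ i < n, C i * A i + D i * B i = 1
  link : ∀ i, i + 1 < n → C i * A (i + 1) + D i * B (i + 1) = 1

namespace IsUnimodularChain

variable {R : Type*} [Ring R]

theorem prod_eq {a b : R} {m : ℕ} {A B C D : ℕ → R}
    (h : IsUnimodularChain a b (m + 1) A B C D) :
    ((List.range (m + 1)).map fun i => vecMulVec ![A i, B i] ![C i, D i]).prod =
      vecMulVec ![1, 0] ![a, b] := by
  have hlinks : ((List.range m).map fun i => ![C i, D i] ⬝ᵥ ![A (i + 1), B (i + 1)]).prod = 1 :=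
    List.prod_eq_one fun x hx => by
      obtain ⟨i, hi, rfl⟩ := List.mem_map.1 hx
      simpa using h.link i (by simpa using hi)
  rw [prod_map_range_succ_vecMulVec, hlinks, one_smul, h.A_zero, h.B_zero, ← h.C_last,
    ← h.D_last, Nat.add_sub_cancel]

theorem isIdempotentElem {a b : R} {n : ℕ} {A B C D : ℕ → R}
    (h : IsUnimodularChain a b n A B C D) {i : ℕ} (hi : i < n) :
    IsIdempotentElem (vecMulVec ![A i, B i] ![C i, D i]) :=
  isIdempotentElem_vecMulVec (by simpa using h.unimodular i hi)

theorem of_isUnit {A B C D p : ℕ → R} {m : ℕ} (hunit : ∀ i ≤ m, IsUnit (p i))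
    (hp0 : p 0 = A 0) (hB0 : B 0 = 0) (hone : ∀ i ≤ m, C i * A i + D i * B i = 1)
    (hstep : ∀ i < m, p i * (C i * A (i + 1) + D i * B (i + 1)) = p (i + 1)) :
    IsUnimodularChain (p m * C m) (p m * D m) (m + 1) (fun i => A i * (p i)⁻¹ʳ)
      (fun i => B i * (p i)⁻¹ʳ) (fun i => p i * C i) (fun i => p i * D i) where
  A_zero := hp0 ▸ Ring.mul_inverse_cancel _ (hunit 0 m.zero_le)
  C_zero := by
    have hA0 : IsUnit (A 0) := hp0 ▸ hunit 0 m.zero_le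
    have hCA : C 0 * A 0 = 1 := by simpa [hB0] using hone 0 m.zero_le
    rw [hp0, ← hA0.mul_left_inj, mul_assoc, hCA, mul_one, one_mul]
  B_zero := by simp [hB0]
  C_last := rfl
  D_last := rfl
  unimodular i hi := by
    calc p i * C i * (A i * (p i)⁻¹ʳ) + p i * D i * (B i * (p i)⁻¹ʳ)
        = p i * (C i * A i + D i * B i) * (p i)⁻¹ʳ := by noncomm_ring
      _ = 1 := by rw [hone i (Nat.le_of_lt_succ hi), mul_one,
                    Ring.mul_inverse_cancel _ (hunit i (Nat.le_of_lt_succ hi))]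
  link i hi := by
    calc p i * C i * (A (i + 1) * (p (i + 1))⁻¹ʳ) + p i * D i * (B (i + 1) * (p (i + 1))⁻¹ʳ)
        = p i * (C i * A (i + 1) + D i * B (i + 1)) * (p (i + 1))⁻¹ʳ := by noncomm_ring
      _ = 1 := by rw [hstep i (Nat.lt_of_succ_lt_succ hi),
                    Ring.mul_inverse_cancel _ (hunit (i + 1) (Nat.le_of_lt_succ hi))]

end IsUnimodularChain

theorem exists_isUnimodularChain_of_prod_eq {R : Type*} [Ring R] [IsDomain R] {a b : R}
    (hcomax : ∃ x y : R, a * x + b * y = 1) {A B C D : ℕ → R} {m : ℕ}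
    (hidem : ∀ i < m + 1, IsIdempotentElem (vecMulVec ![A i, B i] ![C i, D i]))
    (hprod : vecMulVec ![1, 0] ![a, b] =
      ((List.range (m + 1)).map fun i => vecMulVec ![A i, B i] ![C i, D i]).prod) :
    ∃ A' B' C' D', IsUnimodularChain a b (m + 1) A' B' C' D' := by
  obtain ⟨x, y, hxy⟩ := hcomax
  have hab : ![a, b] ⬝ᵥ ![x, y] = 1 := by simpa using hxy
  have hne : vecMulVec ![1, 0] ![a, b] ≠ 0 := by
    rw [Ne, vecMulVec_eq_zero, not_or]
    exact ⟨fun h => one_ne_zero (congrFun h 0), fun h => by simp [h] at hab⟩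
  have hone : ∀ i ≤ m, C i * A i + D i * B i = 1 := fun i hi => by
    simpa using dotProduct_eq_one_of_prod_ne_zero hidem (hprod ▸ hne) (Nat.lt_succ_of_le hi)
  rw [prod_map_range_succ_vecMulVec] at hprod
  simp only [cons_dotProduct_cons, dotProduct_of_isEmpty, add_zero] at hprod
  set t : ℕ → R := fun i => C i * A (i + 1) + D i * B (i + 1)
  set p : ℕ → R := fun i => A 0 * ((List.range i).map t).prod
  obtain ⟨hAk, hB0⟩ := mul_dotProduct_eq_one_of_vecMulVec_eq hprod hab
  have hstep : ∀ i < m, p i * t i = p (i + 1) := fun i _ => by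
    simp [p, List.range_succ, mul_assoc]
  have hunit : ∀ i ≤ m, IsUnit (p i) := fun i hi => by
    refine isUnit_of_le_of_mul_eq_succ hstep (IsUnit.of_mul_eq_one (C m * x + D m * y) ?_) hi
    simpa [p, smul_dotProduct, mul_assoc, mul_add] using hAk
  have ha : p m * C m = a := by simpa [p, mul_assoc] using (congrFun (congrFun hprod 0) 0).symm
  have hb : p m * D m = b := by simpa [p, mul_assoc] using (congrFun (congrFun hprod 0) 1).symm
  exact ⟨_, _, _, _, ha ▸ hb ▸ IsUnimodularChain.of_isUnit hunit (by simp [p]) hB0 hone hstep⟩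

theorem prod_idempotents_iff_exists_chain_general
    (R : Type*) [Ring R] [IsDomain R] (a b : R)
    (hcomax : ∃ x y : R, a * x + b * y = 1) :
    (∃ n : ℕ, 0 < n ∧ ∃ A B C D : ℕ → R,
      A 0 = 1 ∧ C 0 = 1 ∧ B 0 = 0 ∧ C (n - 1) = a ∧ D (n - 1) = b ∧
      (∀ i < n, C i * A i + D i * B i = 1) ∧
      (∀ i, i + 1 < n → C i * A (i + 1) + D i * B (i + 1) = 1)) ↔
    (∃ n : ℕ, 0 < n ∧ ∃ A B C D : ℕ → R,
      (∀ i < n,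
        (!![A i * C i, A i * D i; B i * C i, B i * D i] : Matrix (Fin 2) (Fin 2) R) *
          !![A i * C i, A i * D i; B i * C i, B i * D i] =
            !![A i * C i, A i * D i; B i * C i, B i * D i]) ∧
      (!![a, b; 0, 0] : Matrix (Fin 2) (Fin 2) R) =
        ((List.range n).map
          (fun i => (!![A i * C i, A i * D i; B i * C i, B i * D i] :
            Matrix (Fin 2) (Fin 2) R))).prod) := by
  have hab : (!![a, b; 0, 0] : Matrix (Fin 2) (Fin 2) R) = vecMulVec ![1, 0] ![a, b] := by
    rw [vecMulVec_fin_two]; simp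
  simp only [← vecMulVec_fin_two, hab]
  constructor
  · rintro ⟨n, hn, A, B, C, D, hA, hC, hB, hCa, hDb, hone, hlink⟩
    obtain ⟨m, rfl⟩ := Nat.exists_eq_add_one_of_ne_zero hn.ne'
    have h : IsUnimodularChain a b (m + 1) A B C D := ⟨hA, hC, hB, hCa, hDb, hone, hlink⟩
    exact ⟨m + 1, hn, A, B, C, D, fun i hi => h.isIdempotentElem hi, h.prod_eq.symm⟩
  · rintro ⟨n, hn, A, B, C, D, hidem, hprod⟩
    obtain ⟨m, rfl⟩ := Nat.exists_eq_add_one_of_ne_zero hn.ne'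
    obtain ⟨A', B', C', D', h⟩ := exists_isUnimodularChain_of_prod_eq hcomax hidem hprod
    exact ⟨m + 1, hn, A', B', C', D', h.A_zero, h.C_zero, h.B_zero, h.C_last, h.D_last,
      h.unimodular, h.link⟩

/-- Over a domain `R`, for nonzero `a, b` with `a·R + b·R = R`, the matrix
`!![a, b; 0, 0]` admits a factorization into idempotent matrices of the special
form `(aᵢ, bᵢ)ᵗ (cᵢ, dᵢ)` if and only if a certain family of equations admits a
solution. -/
theorem prod_idempotents_iff_exists_chain
    (R : Type*) [Ring R] [IsDomain R] (a b : R) (ha : a ≠ 0) (hb : b ≠ 0)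
    (hcomax : ∃ x y : R, a * x + b * y = 1) :
    (∃ n : ℕ, 0 < n ∧ ∃ A B C D : ℕ → R,
      A 0 = 1 ∧ C 0 = 1 ∧ B 0 = 0 ∧ C (n - 1) = a ∧ D (n - 1) = b ∧
      (∀ i < n, C i * A i + D i * B i = 1) ∧
      (∀ i, i + 1 < n → C i * A (i + 1) + D i * B (i + 1) = 1)) ↔
    (∃ n : ℕ, 0 < n ∧ ∃ A B C D : ℕ → R,
      (∀ i < n,
        (!![A i * C i, A i * D i; B i * C i, B i * D i] : Matrix (Fin 2) (Fin 2) R) *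
          !![A i * C i, A i * D i; B i * C i, B i * D i] =
            !![A i * C i, A i * D i; B i * C i, B i * D i]) ∧
      (!![a, b; 0, 0] : Matrix (Fin 2) (Fin 2) R) =
        ((List.range n).map
          (fun i => (!![A i * C i, A i * D i; B i * C i, B i * D i] :
            Matrix (Fin 2) (Fin 2) R))).prod) :=
  prod_idempotents_iff_exists_chain_general R a b hcomax
end

section
/- A commutative domain R is a Bézout domain (every finitely generated ideal of R is principal) if and only if R is Hermite, i.e., for all a, b ∈ R there exist an invertible matrix P ∈ GL₂(R) and an element d ∈ R such that the row vector (a, b) multiplied by P equals (d, 0). -/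
/-- A commutative domain is Bézout if and only if it is Hermite: every row
vector `(a, b)` can be transformed into `(d, 0)` by an invertible `2 × 2`
matrix. -/
theorem isBezout_iff_hermite
    (R : Type*) [CommRing R] [IsDomain R] :
    IsBezout R ↔
      ∀ a b : R, ∃ (P : GL (Fin 2) R) (d : R),
        Matrix.vecMul ![a, b] (P : Matrix (Fin 2) (Fin 2) R) = ![d, 0] := by
  rw [IsBezout.iff_span_pair_isPrincipal]
  constructor
  · intro h a b
    obtain ⟨d, hd⟩ := h a b
    by_cases hd0 : d = 0
    · subst hd0
      have ha : a = 0 := by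
        have : a ∈ Ideal.span ({a, b} : Set R) := Ideal.subset_span (by simp)
        rw [hd] at this
        simpa [Ideal.mem_span_singleton] using this
      have hb : b = 0 := by
        have : b ∈ Ideal.span ({a, b} : Set R) := Ideal.subset_span (by simp)
        rw [hd] at this
        simpa [Ideal.mem_span_singleton] using this
      refine ⟨1, 0, ?_⟩
      subst ha; subst hb
      funext i; fin_cases i <;> simp [Matrix.vecMul]
    · have hda : a ∈ Submodule.span R ({d} : Set R) :=
        hd ▸ Ideal.subset_span (by simp)
      have hdb : b ∈ Submodule.span R ({d} : Set R) :=
        hd ▸ Ideal.subset_span (by simp)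
      obtain ⟨a', ha'⟩ := Ideal.mem_span_singleton'.mp hda
      obtain ⟨b', hb'⟩ := Ideal.mem_span_singleton'.mp hdb
      have hdmem : d ∈ Ideal.span ({a, b} : Set R) := by
        rw [hd]; exact Submodule.subset_span rfl
      obtain ⟨x, y, hxy⟩ := Ideal.mem_span_pair.mp hdmem
      have hunit : a' * x + b' * y = 1 := by
        apply mul_left_cancel₀ hd0
        calc d * (a' * x + b' * y) = x * (a' * d) + y * (b' * d) := by ring
        _ = d * 1 := by rw [ha', hb', hxy]; ring
      refine ⟨⟨!![x, -b'; y, a'], !![a', b'; -y, x], ?_, ?_⟩, d, ?_⟩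
      · ext i j; fin_cases i <;> fin_cases j <;>
          simp [Matrix.mul_apply, Fin.sum_univ_two] <;> (first | ring1 | linear_combination hunit)
      · ext i j; fin_cases i <;> fin_cases j <;>
          simp [Matrix.mul_apply, Fin.sum_univ_two] <;> (first | ring1 | linear_combination hunit)
      · funext i; fin_cases i <;>
          simp [Matrix.vecMul, dotProduct, Fin.sum_univ_two]
        · linear_combination hxy
        · linear_combination b' * ha' - a' * hb'
  · intro h a b
    obtain ⟨P, d, hP⟩ := h a b
    refine ⟨d, ?_⟩
    apply le_antisymm
    · have hinv : Matrix.vecMul ![d, 0] ((P⁻¹ : GL (Fin 2) R) : Matrix (Fin 2) (Fin 2) R)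
          = ![a, b] := by
        rw [← hP, Matrix.vecMul_vecMul]
        have h1 : (P : Matrix (Fin 2) (Fin 2) R) * ((P⁻¹ : GL (Fin 2) R) : Matrix _ _ R)
            = 1 := by
          rw [← Units.val_mul, mul_inv_cancel, Units.val_one]
        rw [h1, Matrix.vecMul_one]
      rw [Ideal.span_le]
      rintro z hz
      simp only [SetLike.mem_coe, Submodule.mem_span_singleton]
      rcases hz with rfl | hz
      · have := congrFun hinv 0
        simp [Matrix.vecMul, dotProduct, Fin.sum_univ_two] at this
        exact ⟨_, by rw [smul_eq_mul, mul_comm]; exact this⟩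
      · rw [Set.mem_singleton_iff] at hz; subst hz
        have := congrFun hinv 1
        simp [Matrix.vecMul, dotProduct, Fin.sum_univ_two] at this
        exact ⟨_, by rw [smul_eq_mul, mul_comm]; exact this⟩
    · rw [Submodule.span_le, Set.singleton_subset_iff]
      have := congrFun hP 0
      simp [Matrix.vecMul, dotProduct, Fin.sum_univ_two] at this
      rw [← this]
      exact Ideal.add_mem _ (Ideal.mul_mem_right _ _ (Ideal.subset_span (by simp)))
        (Ideal.mul_mem_right _ _ (Ideal.subset_span (by simp)))
end

section
/- Let R be a commutative Bézout domain with stable range 1. Then R has the IP₂ property: every 2×2 matrix over R with determinant 0 is a product of idempotent matrices. -/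
/-- Bézout split: any pair `(a, b)` in a Bézout domain can be written
`(g * a₁, g * b₁)` with `(a₁, b₁)` unimodular. -/
lemma IP2_aux_bezout_split {R : Type*} [CommRing R] [IsDomain R] [IsBezout R] (a b : R) :
    ∃ g a₁ b₁ α β : R, a = g * a₁ ∧ b = g * b₁ ∧ a₁ * α + b₁ * β = 1 := by
  classical
  obtain ⟨x, y, hxy⟩ := IsBezout.gcd_eq_sum a b
  obtain ⟨a₁, ha⟩ := IsBezout.gcd_dvd_left a b
  obtain ⟨b₁, hb⟩ := IsBezout.gcd_dvd_right a b
  by_cases hg0 : IsBezout.gcd a b = 0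
  · refine ⟨0, 1, 0, 1, 0, ?_, ?_, by ring⟩
    · rw [ha, hg0]; ring
    · rw [hb, hg0]; ring
  · refine ⟨IsBezout.gcd a b, a₁, b₁, x, y, ha, hb, ?_⟩
    apply mul_left_cancel₀ hg0
    rw [mul_one]
    calc IsBezout.gcd a b * (a₁ * x + b₁ * y)
        = x * (IsBezout.gcd a b * a₁) + y * (IsBezout.gcd a b * b₁) := by ring
      _ = x * a + y * b := by rw [← ha, ← hb]
      _ = IsBezout.gcd a b := hxy

/-- The core construction: a rank-one matrix `h • (g₁, t₁)ᵀ (a₁, b₁)` with both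
vectors unimodular is a product of four idempotents, given stable range 1. -/
lemma IP2_aux_core {R : Type*} [CommRing R]
    (hsr : ∀ a b : R, (∃ x y : R, a * x + b * y = 1) →
      ∃ x : R, IsUnit (a + b * x))
    (h g₁ t₁ a₁ b₁ α β γ δ : R)
    (hab : a₁ * α + b₁ * β = 1) (hgt : g₁ * γ + t₁ * δ = 1) :
    ∃ l : List (Matrix (Fin 2) (Fin 2) R),
      (∀ E ∈ l, E * E = E) ∧
      !![h * g₁ * a₁, h * g₁ * b₁; h * t₁ * a₁, h * t₁ * b₁] = l.prod := by
  obtain ⟨z, hz⟩ := hsr a₁ b₁ ⟨α, β, hab⟩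
  obtain ⟨v, hv⟩ := hz.exists_right_inv
  obtain ⟨z₂, hz₂⟩ := hsr g₁ t₁ ⟨γ, δ, hgt⟩
  obtain ⟨v₂, hv₂⟩ := hz₂.exists_right_inv
  have hpw : (1 - v * b₁ * z) * (a₁ + b₁ * z) = a₁ := by
    linear_combination (-(b₁ * z)) * hv
  have hqw : (v * b₁) * (a₁ + b₁ * z) = b₁ := by
    linear_combination b₁ * hv
  have hpw2 : (1 - v₂ * t₁ * z₂) * (g₁ + t₁ * z₂) = g₁ := by
    linear_combination (-(t₁ * z₂)) * hv₂
  have hqw2 : (v₂ * t₁) * (g₁ + t₁ * z₂) = t₁ := by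
    linear_combination t₁ * hv₂
  refine ⟨[!![1 - v₂ * t₁ * z₂, z₂ * (1 - v₂ * t₁ * z₂); v₂ * t₁, v₂ * t₁ * z₂],
           !![1, h * (a₁ + b₁ * z) * (g₁ + t₁ * z₂) - 1; 0, 0],
           !![(1 : R), 0; 1, 0],
           !![1 - v * b₁ * z, v * b₁; z * (1 - v * b₁ * z), v * b₁ * z]], ?_, ?_⟩
  · intro E hE
    simp only [List.mem_cons, List.not_mem_nil, or_false] at hE
    rcases hE with rfl | rfl | rfl | rfl <;>
      (ext i j; fin_cases i <;> fin_cases j <;>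
        simp [Matrix.mul_apply, Fin.sum_univ_two] <;> ring)
  · simp only [List.prod_cons, List.prod_nil, mul_one]
    ext i j
    fin_cases i <;> fin_cases j <;>
      simp [Matrix.mul_apply, Fin.sum_univ_two]
    · linear_combination (-(h * (1 - v * b₁ * z) * (a₁ + b₁ * z))) * hpw2 +
        (-(h * g₁)) * hpw
    · linear_combination (-(h * (v * b₁) * (a₁ + b₁ * z))) * hpw2 +
        (-(h * g₁)) * hqw
    · linear_combination (-(h * (1 - v * b₁ * z) * (a₁ + b₁ * z))) * hqw2 +
        (-(h * t₁)) * hpw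
    · linear_combination (-(h * (v * b₁) * (a₁ + b₁ * z))) * hqw2 +
        (-(h * t₁)) * hqw

/-- Rank-one decomposition of a singular `2 × 2` matrix over a Bézout domain. -/
lemma IP2_aux_decomp {R : Type*} [CommRing R] [IsDomain R] [IsBezout R]
    (A : Matrix (Fin 2) (Fin 2) R) (hA : A.det = 0) :
    ∃ h g₁ t₁ a₁ b₁ α β γ δ : R,
      a₁ * α + b₁ * β = 1 ∧ g₁ * γ + t₁ * δ = 1 ∧
      A = !![h * g₁ * a₁, h * g₁ * b₁; h * t₁ * a₁, h * t₁ * b₁] := by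
  rw [Matrix.det_fin_two] at hA
  obtain ⟨g, a₁, b₁, α, β, ha, hb, hab⟩ := IP2_aux_bezout_split (A 0 0) (A 0 1)
  by_cases hg : g = 0
  · -- first row is zero
    obtain ⟨k, c₁, d₁, γ, δ, hc, hd, hcd⟩ := IP2_aux_bezout_split (A 1 0) (A 1 1)
    refine ⟨k, 0, 1, c₁, d₁, γ, δ, 0, 1, hcd, by ring, ?_⟩
    have ha0 : A 0 0 = 0 := by rw [ha, hg]; ring
    have hb0 : A 0 1 = 0 := by rw [hb, hg]; ring
    ext i j
    fin_cases i <;> fin_cases j <;>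
      simp [ha0, hb0, hc, hd]
  · -- general case: second row is (a₁, b₁)-proportional
    have hkey : a₁ * A 1 1 = b₁ * A 1 0 := by
      apply mul_left_cancel₀ hg
      calc g * (a₁ * A 1 1) = (g * a₁) * A 1 1 := by ring
        _ = A 0 0 * A 1 1 := by rw [← ha]
        _ = A 0 1 * A 1 0 := by linear_combination hA
        _ = (g * b₁) * A 1 0 := by rw [← hb]
        _ = g * (b₁ * A 1 0) := by ring
    set t : R := A 1 0 * α + A 1 1 * β with ht
    have hc : A 1 0 = t * a₁ := by
      calc A 1 0 = A 1 0 * (a₁ * α + b₁ * β) := by rw [hab]; ring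
        _ = (A 1 0 * α) * a₁ + β * (b₁ * A 1 0) := by ring
        _ = (A 1 0 * α) * a₁ + β * (a₁ * A 1 1) := by rw [← hkey]
        _ = t * a₁ := by rw [ht]; ring
    have hd : A 1 1 = t * b₁ := by
      calc A 1 1 = A 1 1 * (a₁ * α + b₁ * β) := by rw [hab]; ring
        _ = α * (a₁ * A 1 1) + (A 1 1 * β) * b₁ := by ring
        _ = α * (b₁ * A 1 0) + (A 1 1 * β) * b₁ := by rw [hkey]
        _ = t * b₁ := by rw [ht]; ring
    obtain ⟨h, g₁, t₁, γ, δ, hg', ht', hgt⟩ := IP2_aux_bezout_split g t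
    refine ⟨h, g₁, t₁, a₁, b₁, α, β, γ, δ, hab, hgt, ?_⟩
    ext i j
    fin_cases i <;> fin_cases j <;>
      simp [ha, hb, hc, hd, hg', ht']

/-- A commutative Bézout domain with stable range 1 has the IP₂ property:
every singular `2 × 2` matrix is a product of idempotent matrices. -/
theorem IP2_of_bezout_stableRangeOne
    (R : Type*) [CommRing R] [IsDomain R] [IsBezout R]
    (hsr : ∀ a b : R, (∃ x y : R, a * x + b * y = 1) →
      ∃ x : R, IsUnit (a + b * x)) :
    ∀ A : Matrix (Fin 2) (Fin 2) R, A.det = 0 →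
      ∃ l : List (Matrix (Fin 2) (Fin 2) R),
        (∀ E ∈ l, E * E = E) ∧ A = l.prod := by
  intro A hA
  obtain ⟨h, g₁, t₁, a₁, b₁, α, β, γ, δ, hab, hgt, hAeq⟩ := IP2_aux_decomp A hA
  obtain ⟨l, hl, hprod⟩ := IP2_aux_core hsr h g₁ t₁ a₁ b₁ α β γ δ hab hgt
  exact ⟨l, hl, by rw [hAeq, hprod]⟩
end

section
/- Let R be a commutative Bézout domain and let a, b ∈ R satisfy a·R + b·R = R. Then for every integer n > 0 the following are equivalent: (i) the 2×2 matrix with rows (a, b) and (0, 0) is a product of n idempotent matrices; (ii) there exist elements r₀, r₁, …, r_{2n−2} ∈ R such that the row vector (a, b) equals (1, 0) multiplied on the right by the product M(r_{2n−2})·M(r_{2n−3}) ⋯ M(r₀)·J, where M(r) is the 2×2 matrix with rows (r, 1) and (1, 0), and J is the 2×2 matrix with rows (0, −1) and (1, 0). -/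
/-!
Say that rows `u, v ∈ R²` have a common section if `u ⬝ c = 1 = v ⬝ c` for some column `c`.
Since `(1, 0) M(x) M(y) = (xy + 1, x)`, the rows sharing a section with `(1, 0)` are exactly the
rows `(1, 0) M(x) M(y)`; transporting along the invertible matrix `M(w₀) ⋯ M(wₖ) J`, the rows
sharing a section with the row of a word `w` are the rows of the words `x y w`.
Idempotents realise exactly this relation: a common section `c` of `u` and `v` gives the
idempotent `E = c v` with `u E = v`, and if `v = u E` is unimodular with `E` idempotent, then
`E c` is a common section of `u` and `v` for any `c` with `v ⬝ c = 1`. Hence every idempotent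
factor of `(1, 0)ᵀ (a, b)` prepends two letters. The first factor fixes the column `(1, 0)ᵀ`, so
its first row is some `(1, s)`, the row of the one-letter word `-s`; this gives length `2n - 1`.
-/

open Matrix

namespace ContinuedFractionIdempotents

variable {R : Type*} [CommRing R]

section CommonSection

variable {n : Type*} [Fintype n]

def HasCommonSection (u v : n → R) : Prop := ∃ c, u ⬝ᵥ c = 1 ∧ v ⬝ᵥ c = 1

theorem HasCommonSection.of_vecMul {u v : n → R} {U : Matrix n n R}
    (h : HasCommonSection (u ᵥ* U) (v ᵥ* U)) : HasCommonSection u v := by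
  obtain ⟨c, hu, hv⟩ := h
  exact ⟨U *ᵥ c, by rwa [dotProduct_mulVec], by rwa [dotProduct_mulVec]⟩

theorem hasCommonSection_vecMul_iff [DecidableEq n] {u v : n → R} {U : Matrix n n R}
    (hU : IsUnit U) : HasCommonSection (u ᵥ* U) (v ᵥ* U) ↔ HasCommonSection u v := by
  obtain ⟨U, rfl⟩ := hU
  refine ⟨.of_vecMul, fun h => .of_vecMul (U := ↑U⁻¹) ?_⟩
  simpa only [vecMul_vecMul, Units.mul_inv, vecMul_one] using h

theorem hasCommonSection_vecMul_of_isIdempotentElem {u : n → R} {E : Matrix n n R}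
    (hE : IsIdempotentElem E) {c : n → R} (hc : u ᵥ* E ⬝ᵥ c = 1) :
    HasCommonSection u (u ᵥ* E) :=
  ⟨E *ᵥ c, by rwa [dotProduct_mulVec], by rwa [dotProduct_mulVec, vecMul_vecMul, hE.eq]⟩

theorem isIdempotentElem_vecMulVec {c v : n → R} (h : v ⬝ᵥ c = 1) :
    IsIdempotentElem (vecMulVec c v) := by
  rw [IsIdempotentElem, vecMulVec_mul_vecMulVec, h, one_smul]

theorem vecMulVec_mulVec_of_eq_one {m : Type*} {u : m → R} {v c : n → R} (h : v ⬝ᵥ c = 1) :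
    vecMulVec u v *ᵥ c = u := by
  rw [vecMulVec_mulVec, h, MulOpposite.op_one, one_smul]

theorem HasCommonSection.exists_vecMulVec_eq_mul {m : Type*} {u v : n → R}
    (h : HasCommonSection u v) (e : m → R) :
    ∃ E : Matrix n n R, IsIdempotentElem E ∧ vecMulVec e v = vecMulVec e u * E := by
  obtain ⟨c, hu, hv⟩ := h
  exact ⟨vecMulVec c v, isIdempotentElem_vecMulVec hv,
    by rw [vecMulVec_mul_vecMulVec, hu, one_smul]⟩

end CommonSection

def cfStep (r : R) : Matrix (Fin 2) (Fin 2) R := !![r, 1; 1, 0]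

def cfMatrix (w : List R) : Matrix (Fin 2) (Fin 2) R :=
  (w.map cfStep).prod * !![0, -1; 1, 0]

def cfRow (w : List R) : Fin 2 → R := ![1, 0] ᵥ* cfMatrix w

theorem isUnit_cfMatrix (w : List R) : IsUnit (cfMatrix w) := by
  refine (List.prod_isUnit fun M hM => ?_).mul ?_
  · obtain ⟨r, -, rfl⟩ := List.mem_map.1 hM
    simp [isUnit_iff_isUnit_det, cfStep, det_fin_two_of]
  · simp [isUnit_iff_isUnit_det, det_fin_two_of]

theorem cfMatrix_cons (x : R) (w : List R) : cfMatrix (x :: w) = cfStep x * cfMatrix w := by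
  simp only [cfMatrix, List.map_cons, List.prod_cons, Matrix.mul_assoc]

theorem cfRow_singleton (r : R) : cfRow [r] = ![1, -r] := by
  ext i
  fin_cases i <;> simp [cfRow, cfMatrix, cfStep, vecMul, dotProduct]

theorem one_zero_vecMul_cfStep_mul_cfStep (x y : R) :
    ![1, 0] ᵥ* (cfStep x * cfStep y) = ![x * y + 1, x] := by
  ext i
  fin_cases i <;> simp [cfStep, vecMul, dotProduct]

theorem hasCommonSection_one_zero_iff {v : Fin 2 → R} :
    HasCommonSection ![1, 0] v ↔ ∃ x y, v = ![1, 0] ᵥ* (cfStep x * cfStep y) := by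
  simp only [one_zero_vecMul_cfStep_mul_cfStep]
  constructor
  · rintro ⟨c, hc, hv⟩
    simp only [dotProduct, Fin.sum_univ_two, Fin.isValue, Matrix.cons_val_zero,
      Matrix.cons_val_one, one_mul, zero_mul, add_zero] at hc hv
    refine ⟨v 1, -c 1, ?_⟩
    ext i
    fin_cases i
    · simp only [Fin.zero_eta, Fin.isValue, Matrix.cons_val_zero]
      linear_combination hv - v 0 * hc
    · simp
  · rintro ⟨x, y, rfl⟩
    exact ⟨![1, -y], by simp [dotProduct], by simp [dotProduct]⟩

theorem hasCommonSection_cfRow_iff {w : List R} {v : Fin 2 → R} :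
    HasCommonSection (cfRow w) v ↔ ∃ x y, v = cfRow (x :: y :: w) := by
  have hU := isUnit_cfMatrix w
  obtain ⟨q, rfl⟩ := (vecMul_surjective_iff_isUnit (A := cfMatrix w)).2 hU v
  simp only [cfRow, cfMatrix_cons, ← Matrix.mul_assoc, ← vecMul_vecMul,
    hasCommonSection_vecMul_iff hU, (vecMul_injective_of_isUnit hU).eq_iff]
  simp only [hasCommonSection_one_zero_iff, vecMul_vecMul]

theorem exists_cfRow_eq_cfRow_vecMul_prod {w : List R} {l : List (Matrix (Fin 2) (Fin 2) R)}
    (hl : ∀ E ∈ l, IsIdempotentElem E) {c : Fin 2 → R} (hc : cfRow w ᵥ* l.prod ⬝ᵥ c = 1) :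
    ∃ w', w'.length = w.length + 2 * l.length ∧ cfRow w ᵥ* l.prod = cfRow w' := by
  induction l generalizing w with
  | nil => exact ⟨w, rfl, vecMul_one _⟩
  | cons E l ih =>
    rw [List.prod_cons, ← vecMul_vecMul] at hc ⊢
    have hlink := hasCommonSection_vecMul_of_isIdempotentElem (hl E List.mem_cons_self)
      (c := l.prod *ᵥ c) (by rwa [dotProduct_mulVec])
    obtain ⟨x, y, hxy⟩ := hasCommonSection_cfRow_iff.1 hlink
    rw [hxy] at hc ⊢
    obtain ⟨w', hlen, hw'⟩ := ih (fun F hF => hl F (List.mem_cons_of_mem E hF)) hc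
    exact ⟨w', by simp only [hlen, List.length_cons]; ring, hw'⟩

theorem exists_cfRow_of_vecMulVec_eq_prod {v c : Fin 2 → R} (hc : v ⬝ᵥ c = 1)
    {E : Matrix (Fin 2) (Fin 2) R} {l : List (Matrix (Fin 2) (Fin 2) R)}
    (hl : ∀ F ∈ E :: l, IsIdempotentElem F) (h : vecMulVec ![1, 0] v = (E :: l).prod) :
    ∃ w, w.length = 2 * l.length + 1 ∧ v = cfRow w := by
  have hE : IsIdempotentElem E := hl E List.mem_cons_self
  have hEe : E *ᵥ ![1, 0] = ![1, 0] :=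
    calc E *ᵥ ![1, 0] = vecMulVec (E *ᵥ ![1, 0]) v *ᵥ c := (vecMulVec_mulVec_of_eq_one hc).symm
      _ = vecMulVec ![1, 0] v *ᵥ c := by
        rw [← mul_vecMulVec, h, List.prod_cons, ← Matrix.mul_assoc, hE.eq]
      _ = ![1, 0] := vecMulVec_mulVec_of_eq_one hc
  have hrow : ![1, 0] ᵥ* E = cfRow [-E 0 1] := by
    rw [cfRow_singleton, neg_neg]
    ext i
    fin_cases i
    · simpa [vecMul, mulVec, dotProduct] using congrFun hEe 0
    · simp [vecMul, dotProduct]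
  have hv : v = cfRow [-E 0 1] ᵥ* l.prod := by
    rw [← hrow, vecMul_vecMul, ← List.prod_cons, ← h, vecMul_vecMulVec]
    simp [dotProduct]
  rw [hv] at hc ⊢
  obtain ⟨w, hlen, hw⟩ := exists_cfRow_eq_cfRow_vecMul_prod (List.forall_mem_cons.1 hl).2 hc
  exact ⟨w, by simp only [hlen, List.length_singleton]; ring, hw⟩

theorem exists_prod_eq_vecMulVec_cfRow (m : ℕ) {w : List R} (hw : w.length = 2 * m + 1) :
    ∃ l : List (Matrix (Fin 2) (Fin 2) R), l.length = m + 1 ∧ (∀ E ∈ l, IsIdempotentElem E) ∧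
      vecMulVec ![1, 0] (cfRow w) = l.prod := by
  induction m generalizing w with
  | zero =>
    obtain ⟨r, rfl⟩ := List.length_eq_one_iff.1 hw
    refine ⟨[vecMulVec ![1, 0] (cfRow [r])], rfl, ?_, (List.prod_singleton).symm⟩
    simp only [List.mem_singleton, forall_eq]
    exact isIdempotentElem_vecMulVec (by simp [cfRow_singleton, dotProduct])
  | succ m ih =>
    obtain ⟨x, y, w, rfl⟩ : ∃ x y w', w = x :: y :: w' := by
      match w, hw with
      | x :: y :: w', _ => exact ⟨x, y, w', rfl⟩
    obtain ⟨l, hlen, hl, hprod⟩ := ih (w := w) (by simp only [List.length_cons] at hw; omega)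
    obtain ⟨E, hE, hEq⟩ := (hasCommonSection_cfRow_iff.2 ⟨x, y, rfl⟩).exists_vecMulVec_eq_mul
      ![(1 : R), 0]
    refine ⟨l ++ [E], by simp [hlen], ?_, by rw [hEq, hprod, List.prod_append, List.prod_singleton]⟩
    simpa [or_imp, forall_and] using ⟨hl, hE⟩

theorem exists_ofFn_prod_iff {M : Type*} [Monoid M] (P : M → Prop) (x : M) (n : ℕ) :
    (∃ E : Fin n → M, (∀ i, P (E i)) ∧ x = (List.ofFn E).prod) ↔
      ∃ l : List M, l.length = n ∧ (∀ F ∈ l, P F) ∧ x = l.prod := by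
  constructor
  · rintro ⟨E, hE, h⟩
    exact ⟨List.ofFn E, List.length_ofFn, List.forall_mem_ofFn_iff.2 hE, h⟩
  · rintro ⟨l, rfl, hl, h⟩
    exact ⟨l.get, fun i => hl _ (List.get_mem l i), by rwa [List.ofFn_get]⟩

theorem exists_cfRow_iff (L : ℕ) (v : Fin 2 → R) :
    (∃ r : ℕ → R, v = ![1, 0] ᵥ* ((((List.range (L + 1)).map
        fun k => (!![r (L - k), 1; 1, 0] : Matrix (Fin 2) (Fin 2) R)).prod) * !![0, -1; 1, 0])) ↔
      ∃ w : List R, w.length = L + 1 ∧ v = cfRow w := by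
  have hmap (r : ℕ → R) : ((List.range (L + 1)).map fun k => !![r (L - k), 1; 1, 0]) =
      ((List.range (L + 1)).map fun k => r (L - k)).map cfStep := by
    rw [List.map_map]; rfl
  constructor
  · rintro ⟨r, h⟩
    exact ⟨(List.range (L + 1)).map fun k => r (L - k), by simp, by rw [h, hmap]; rfl⟩
  · rintro ⟨w, hw, rfl⟩
    refine ⟨fun j => w.getD (L - j) 0, ?_⟩
    have hw' : ((List.range (L + 1)).map fun k => w.getD (L - (L - k)) 0) = w := by
      refine List.ext_getElem (by simp [hw]) fun k hk _ => ?_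
      simp only [List.length_map, List.length_range] at hk
      simp [Nat.sub_sub_self (Nat.le_of_lt_succ hk), hw]
    have h := hmap fun j => w.getD (L - j) 0
    beta_reduce at h ⊢
    rw [h, hw']
    rfl

end ContinuedFractionIdempotents

open ContinuedFractionIdempotents in
theorem prod_n_idempotents_iff_continued_fraction_general
    (R : Type*) [CommRing R] (a b : R)
    (hcomax : ∃ x y : R, a * x + b * y = 1) (n : ℕ) (hn : 0 < n) :
    (∃ E : Fin n → Matrix (Fin 2) (Fin 2) R,
      (∀ i, E i * E i = E i) ∧
        (!![a, b; 0, 0] : Matrix (Fin 2) (Fin 2) R) = (List.ofFn E).prod) ↔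
    (∃ r : ℕ → R,
      ![a, b] = Matrix.vecMul ![1, 0]
        ((((List.range (2 * n - 1)).map
          (fun k => (!![r (2 * n - 2 - k), 1; 1, 0] : Matrix (Fin 2) (Fin 2) R))).prod) *
            !![0, -1; 1, 0])) := by
  obtain ⟨x, y, hxy⟩ := hcomax
  obtain ⟨m, rfl⟩ : ∃ m, n = m + 1 := ⟨n - 1, by omega⟩
  have hrow : !![a, b; 0, 0] = vecMulVec ![1, 0] ![a, b] := by
    ext i j; fin_cases i <;> fin_cases j <;> simp [vecMulVec]
  rw [show 2 * (m + 1) - 1 = 2 * m + 1 by omega, show 2 * (m + 1) - 2 = 2 * m by omega,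
    exists_cfRow_iff, hrow, exists_ofFn_prod_iff fun F => F * F = F]
  constructor
  · rintro ⟨l, hlen, hl, h⟩
    obtain ⟨E, l, rfl⟩ := List.exists_cons_of_length_eq_add_one hlen
    obtain ⟨w, hw, hab⟩ := exists_cfRow_of_vecMulVec_eq_prod (c := ![x, y])
      (by simpa [dotProduct] using hxy) hl h
    exact ⟨w, by simp only [List.length_cons] at hlen; omega, hab⟩
  · rintro ⟨w, hw, hab⟩
    rw [hab]
    exact exists_prod_eq_vecMulVec_cfRow m hw

/-- Over a commutative Bézout domain, for `a, b` with `a·R + b·R = R` and `n > 0`,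
the matrix `!![a, b; 0, 0]` is a product of `n` idempotent matrices if and only
if `(a, b) = (1, 0) · M(r_{2n-2}) ⋯ M(r₀) · J` for some `r₀, …, r_{2n-2} ∈ R`,
where `M(r) = !![r, 1; 1, 0]` and `J = !![0, -1; 1, 0]`. -/
theorem prod_n_idempotents_iff_continued_fraction
    (R : Type*) [CommRing R] [IsDomain R] [IsBezout R] (a b : R)
    (hcomax : ∃ x y : R, a * x + b * y = 1) (n : ℕ) (hn : 0 < n) :
    (∃ E : Fin n → Matrix (Fin 2) (Fin 2) R,
      (∀ i, E i * E i = E i) ∧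
        (!![a, b; 0, 0] : Matrix (Fin 2) (Fin 2) R) = (List.ofFn E).prod) ↔
    (∃ r : ℕ → R,
      ![a, b] = Matrix.vecMul ![1, 0]
        ((((List.range (2 * n - 1)).map
          (fun k => (!![r (2 * n - 2 - k), 1; 1, 0] : Matrix (Fin 2) (Fin 2) R))).prod) *
            !![0, -1; 1, 0])) :=
  prod_n_idempotents_iff_continued_fraction_general R a b hcomax n hn
end

section
/- Let R be a ring, M an injective right R-module, and S = End_R(M) its endomorphism ring. Suppose that every right singular element of S (every s ∈ S for which there exists t ∈ S, t ≠ 0, with s∘t = 0) is a product of idempotent endomorphisms. Then S has stable range 1: for all a, b ∈ S with a·S + b·S = S (i.e., there exist x, y ∈ S with a∘x + b∘y = id), there exists x ∈ S such that a + b∘x is a unit of S. -/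
namespace SR1Aux

section RingLemmas

variable {A : Type*} [Ring A]

/-- `1 - e*x*(1-e)` is a unit when `e` is idempotent. -/
lemma isUnit_one_sub_exe (e x : A) (he : e * e = e) :
    IsUnit (1 - e * x * (1 - e)) := by
  set n := e * x * (1 - e) with hn
  have h0 : (1 - e) * e = 0 := by rw [sub_mul, one_mul, he, sub_self]
  have hnn : n * n = 0 := by
    have h : n * n = e * x * ((1 - e) * e * (x * (1 - e))) := by rw [hn]; noncomm_ring
    rw [h, h0, zero_mul, mul_zero]
  refine ⟨⟨1 - n, 1 + n, ?_, ?_⟩, rfl⟩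
  · have h : (1 - n) * (1 + n) = 1 - n * n := by noncomm_ring
    rw [h, hnn, sub_zero]
  · have h : (1 + n) * (1 - n) = 1 - n * n := by noncomm_ring
    rw [h, hnn, sub_zero]

/-- Lemma A: products of idempotents satisfy the elementwise stable range 1 condition. -/
lemma lemA : ∀ (l : List A), (∀ e ∈ l, e * e = e) → ∀ x b : A,
    l.prod * x + b = 1 → ∃ z, IsUnit (l.prod + b * z) := by
  intro l
  induction l using List.reverseRecOn with
  | nil =>
      intro _ x b _
      exact ⟨0, by simp⟩
  | append_singleton l' e ih =>
      intro hl x b hab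
      have he : e * e = e := hl e (by simp)
      have hl' : ∀ f ∈ l', f * f = f := fun f hf => hl f (by simp [hf])
      set c := l'.prod with hc
      have h1 : c * (e * x) + b = 1 := by
        rw [List.prod_append, List.prod_singleton] at hab
        rw [← mul_assoc]; exact hab
      obtain ⟨z', hz'⟩ := ih hl' (e * x) b h1
      obtain ⟨u, hu⟩ := hz'
      have key : (↑u : A) * (e * x) + b * (1 - z' * (e * x)) = 1 := by
        have h2 : (↑u : A) * (e * x) + b * (1 - z' * (e * x))
            = (c + b * z') * (e * x) + b * (1 - z' * (e * x)) := by rw [hu]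
        rw [h2]
        calc (c + b * z') * (e * x) + b * (1 - z' * (e * x))
            = c * (e * x) + b := by noncomm_ring
          _ = 1 := h1
      have hB : b * (1 - z' * (e * x)) = 1 - (↑u : A) * (e * x) :=
        eq_sub_of_add_eq' key
      refine ⟨z' * e + (1 - z' * (e * x)) * ↑u * (1 - e), ?_⟩
      have hfinal : (l' ++ [e]).prod + b * (z' * e + (1 - z' * (e * x)) * ↑u * (1 - e))
          = ↑u * (1 - e * (x * ↑u) * (1 - e)) := by
        rw [List.prod_append, List.prod_singleton, ← hc]
        have h3 : c * e + b * (z' * e + (1 - z' * (e * x)) * ↑u * (1 - e))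
            = (c + b * z') * e + (b * (1 - z' * (e * x))) * ↑u * (1 - e) := by noncomm_ring
        rw [h3, ← hu, hB]
        noncomm_ring
      rw [hfinal]
      exact u.isUnit.mul (isUnit_one_sub_exe e (x * ↑u) he)

/-- A product of idempotents with a right inverse is `1`. -/
lemma prod_idem_eq_one : ∀ (l : List A), (∀ e ∈ l, e * e = e) → ∀ t : A,
    l.prod * t = 1 → l.prod = 1 := by
  intro l
  induction l with
  | nil => intro _ _ _; rfl
  | cons e l' ih =>
      intro hl t ht
      have he : e * e = e := hl e (by simp)
      rw [List.prod_cons, mul_assoc] at ht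
      have he1 : e = 1 := by
        calc e = e * (e * (l'.prod * t)) := by rw [ht, mul_one]
          _ = e * e * (l'.prod * t) := by rw [mul_assoc]
          _ = e * (l'.prod * t) := by rw [he]
          _ = 1 := ht
      rw [he1, one_mul] at ht
      have h2 := ih (fun f hf => hl f (by simp [hf])) t ht
      rw [List.prod_cons, he1, one_mul, h2]

variable (hsing : ∀ s : A, (∃ t : A, t ≠ 0 ∧ s * t = 0) →
    ∃ l : List A, (∀ e ∈ l, e * e = e) ∧ s = l.prod)

include hsing in
/-- Direct finiteness. -/
lemma df : ∀ s t : A, s * t = 1 → t * s = 1 := by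
  intro s t hst
  by_contra hts
  have h1 : s * (1 - t * s) = 0 := by
    rw [mul_sub, mul_one, ← mul_assoc, hst, one_mul, sub_self]
  have hne : (1 : A) - t * s ≠ 0 := sub_ne_zero.mpr fun h => hts h.symm
  obtain ⟨l, hl, hs⟩ := hsing s ⟨1 - t * s, hne, h1⟩
  have hs1 : s = 1 := by rw [hs]; exact prod_idem_eq_one l hl t (by rw [← hs]; exact hst)
  rw [hs1, one_mul] at hst
  rw [hst, hs1, mul_one] at hts
  exact hts rfl

include hsing in
lemma isUnit_of_mul_inv (s t : A) (hst : s * t = 1) : IsUnit s :=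
  ⟨⟨s, t, hst, df hsing s t hst⟩, rfl⟩

end RingLemmas

section ModuleLemmas

variable {R : Type*} [Ring R] {M : Type*} [AddCommGroup M] [Module R M]

/-- Essentiality of a submodule, elementwise form. -/
def Ess (K : Submodule R M) : Prop :=
  ∀ m : M, m ≠ 0 → ∃ r : R, r • m ≠ 0 ∧ r • m ∈ K

lemma ess_mono {K K' : Submodule R M} (h : K ≤ K') (hK : Ess K) : Ess K' :=
  fun m hm => let ⟨r, h1, h2⟩ := hK m hm; ⟨r, h1, h h2⟩

lemma ess_top : Ess (⊤ : Submodule R M) :=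
  fun m hm => ⟨1, by rwa [one_smul], trivial⟩

lemma ess_inf {K K' : Submodule R M} (hK : Ess K) (hK' : Ess K') : Ess (K ⊓ K') := by
  intro m hm
  obtain ⟨r, h1, h2⟩ := hK m hm
  obtain ⟨r', h1', h2'⟩ := hK' (r • m) h1
  refine ⟨r' * r, by rwa [mul_smul], ?_⟩
  rw [mul_smul]
  exact Submodule.mem_inf.mpr ⟨Submodule.smul_mem K r' h2, h2'⟩

lemma ess_comap (f : Module.End R M) {K : Submodule R M} (h : Ess K) :
    Ess (K.comap f) := by
  intro m hm
  by_cases hf : f m = 0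
  · refine ⟨1, by rwa [one_smul], ?_⟩
    rw [Submodule.mem_comap, one_smul, hf]
    exact K.zero_mem
  · obtain ⟨r, h1, h2⟩ := h (f m) hf
    refine ⟨r, fun h0 => h1 (by rw [← map_smul, h0, map_zero]), ?_⟩
    rw [Submodule.mem_comap, map_smul]
    exact h2

/-- Essential kernels behave well under sums. -/
lemma ess_ker_add {f g : Module.End R M} (hf : Ess (LinearMap.ker f))
    (hg : Ess (LinearMap.ker g)) : Ess (LinearMap.ker (f + g)) := by
  refine ess_mono ?_ (ess_inf hf hg)
  intro m hm
  obtain ⟨h1, h2⟩ := Submodule.mem_inf.mp hm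
  rw [LinearMap.mem_ker] at h1 h2 ⊢
  rw [LinearMap.add_apply, h1, h2, add_zero]

lemma ess_ker_mul_left (f : Module.End R M) {g : Module.End R M}
    (hg : Ess (LinearMap.ker g)) : Ess (LinearMap.ker (f * g)) := by
  refine ess_mono ?_ hg
  intro m hm
  rw [LinearMap.mem_ker] at hm ⊢
  rw [Module.End.mul_apply, hm, map_zero]

lemma ess_ker_mul_right {f : Module.End R M} (g : Module.End R M)
    (hf : Ess (LinearMap.ker f)) : Ess (LinearMap.ker (f * g)) := by
  refine ess_mono ?_ (ess_comap g hf)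
  intro m hm
  rw [Submodule.mem_comap, LinearMap.mem_ker] at hm
  rw [LinearMap.mem_ker, Module.End.mul_apply]
  exact hm

lemma ess_ker_neg {f : Module.End R M} (hf : Ess (LinearMap.ker f)) :
    Ess (LinearMap.ker (-f)) := by
  refine ess_mono ?_ hf
  intro m hm
  rw [LinearMap.mem_ker] at hm ⊢
  rw [LinearMap.neg_apply, hm, neg_zero]

/-- Existence of a maximal complement, with essentiality of the sup. -/
lemma exists_compl' (T : Submodule R M) :
    ∃ C : Submodule R M, T ⊓ C = ⊥ ∧ (∀ C', C ≤ C' → T ⊓ C' = ⊥ → C' = C) ∧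
      Ess (T ⊔ C) := by
  have hzorn : ∀ c ⊆ {C : Submodule R M | T ⊓ C = ⊥}, IsChain (· ≤ ·) c →
      ∃ ub ∈ {C : Submodule R M | T ⊓ C = ⊥}, ∀ z ∈ c, z ≤ ub := by
    intro c hc hchain
    rcases Set.eq_empty_or_nonempty c with rfl | hne
    · exact ⟨⊥, by simp, fun z hz => absurd hz (Set.notMem_empty z)⟩
    · refine ⟨sSup c, ?_, fun z hz => le_sSup hz⟩
      rw [Set.mem_setOf_eq, Submodule.eq_bot_iff]
      intro x hx
      obtain ⟨hxT, hxS⟩ := Submodule.mem_inf.mp hx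
      obtain ⟨C', hC'c, hxC'⟩ :=
        (Submodule.mem_sSup_of_directed hne hchain.directedOn).mp hxS
      have hbot := hc hC'c
      rw [Set.mem_setOf_eq] at hbot
      have hx0 : x ∈ (⊥ : Submodule R M) := hbot ▸ Submodule.mem_inf.mpr ⟨hxT, hxC'⟩
      exact hx0
  obtain ⟨C, hC, hCmax⟩ := zorn_le₀ {C : Submodule R M | T ⊓ C = ⊥} hzorn
  · have hmax' : ∀ C', C ≤ C' → T ⊓ C' = ⊥ → C' = C := fun C' hle h' =>
      le_antisymm (hCmax h' hle) hle
    refine ⟨C, hC, hmax', ?_⟩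
    intro m hm
    by_contra hcon
    push_neg at hcon
    have hr : ∀ r : R, r • m ∈ T ⊔ C → r • m = 0 := by
      intro r hmem
      by_contra h0
      exact hcon r h0 hmem
    have hC' : T ⊓ (C ⊔ Submodule.span R {m}) = ⊥ := by
      rw [Submodule.eq_bot_iff]
      intro x hx
      obtain ⟨hxT, hxC'⟩ := Submodule.mem_inf.mp hx
      obtain ⟨cc, hcc, s, hs, hx'⟩ := Submodule.mem_sup.mp hxC'
      obtain ⟨r, hr'⟩ := Submodule.mem_span_singleton.mp hs
      have hmem : r • m ∈ T ⊔ C := by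
        have hx'' : r • m = x - cc := by rw [hr', ← hx']; abel
        rw [hx'']
        exact Submodule.sub_mem _ (Submodule.mem_sup_left hxT)
          (Submodule.mem_sup_right hcc)
      have h0 := hr r hmem
      have hxc : x = cc := by rw [← hx', ← hr', h0, add_zero]
      have hxbot : x ∈ T ⊓ C := Submodule.mem_inf.mpr ⟨hxT, hxc ▸ hcc⟩
      rw [hC] at hxbot
      exact hxbot
    have hCeq := hmax' _ le_sup_left hC'
    have hmC : m ∈ C := by
      have hmm : m ∈ C ⊔ Submodule.span R {m} :=
        Submodule.mem_sup_right (Submodule.mem_span_singleton_self m)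
      rwa [hCeq] at hmm
    have h1 := hr 1 (by rw [one_smul]; exact Submodule.mem_sup_right hmC)
    rw [one_smul] at h1
    exact hm h1

/-- Existence of a maximal essential extension of `L` inside `M`. -/
lemma exists_maxEss (L : Submodule R M) :
    ∃ T : Submodule R M, L ≤ T ∧
      (∀ m ∈ T, m ≠ 0 → ∃ r : R, r • m ≠ 0 ∧ r • m ∈ L) ∧
      (∀ N, T ≤ N → L ≤ N →
        (∀ m ∈ N, m ≠ 0 → ∃ r : R, r • m ≠ 0 ∧ r • m ∈ L) → N = T) := by
  set s : Set (Submodule R M) :=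
    {N | L ≤ N ∧ ∀ m ∈ N, m ≠ 0 → ∃ r : R, r • m ≠ 0 ∧ r • m ∈ L} with hs
  have hLs : L ∈ s := ⟨le_rfl, fun m hm hm0 => ⟨1, by rwa [one_smul], by rwa [one_smul]⟩⟩
  have hzorn : ∀ c ⊆ s, IsChain (· ≤ ·) c → ∀ y ∈ c, ∃ ub ∈ s, ∀ z ∈ c, z ≤ ub := by
    intro c hc hchain y hyc
    refine ⟨sSup c, ⟨le_trans (hc hyc).1 (le_sSup hyc), ?_⟩, fun z hz => le_sSup hz⟩
    intro m hm hm0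
    obtain ⟨N, hNc, hmN⟩ :=
      (Submodule.mem_sSup_of_directed ⟨y, hyc⟩ hchain.directedOn).mp hm
    exact (hc hNc).2 m hmN hm0
  obtain ⟨T, _, hTs, hTmax⟩ := zorn_le_nonempty₀ s hzorn L hLs
  exact ⟨T, hTs.1, hTs.2, fun N hTN hLN hN => le_antisymm (hTmax ⟨hLN, hN⟩ hTN) hTN⟩

section Injective

variable [Module.Injective R M]

/-- Extension of a linear map defined on a submodule. -/
lemma extend_sub (W : Submodule R M) (g : W →ₗ[R] M) :
    ∃ p : M →ₗ[R] M, ∀ (w : M) (hw : w ∈ W), p w = g ⟨w, hw⟩ := by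
  obtain ⟨p, hp⟩ := Module.Injective.out W.subtype W.injective_subtype g
  exact ⟨p, fun w hw => hp ⟨w, hw⟩⟩

/-- An injective endomorphism has a left inverse. -/
lemma exists_left_inv (s : Module.End R M) (hs : Function.Injective s) :
    ∃ u : Module.End R M, u * s = 1 := by
  obtain ⟨u, hu⟩ := Module.Injective.out (s : M →ₗ[R] M) hs (LinearMap.id)
  refine ⟨u, ?_⟩
  ext m
  exact hu m

/-- The key construction: an idempotent projection onto a maximal essential
extension of `L`, such that `a * p` has essential kernel whenever `a` kills `L`. -/
lemma exists_idem_proj (L : Submodule R M) :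
    ∃ p : Module.End R M, p * p = p ∧ (∀ x ∈ L, p x = x) ∧
      ∀ a : Module.End R M, (∀ x ∈ L, a x = 0) → Ess (LinearMap.ker (a * p)) := by
  obtain ⟨T, hLT, hTess, hTmax⟩ := exists_maxEss L
  obtain ⟨C, hTC, hCmax, hTCess⟩ := exists_compl' T
  set W := T ⊔ C with hW
  set T' : Submodule R W := T.comap W.subtype with hT'
  set C' : Submodule R W := C.comap W.subtype with hC'
  have hcompl : IsCompl T' C' := by
    constructor
    · rw [disjoint_iff, Submodule.eq_bot_iff]
      intro x hx
      obtain ⟨h1, h2⟩ := Submodule.mem_inf.mp hx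
      have hxm : (x : M) ∈ T ⊓ C := Submodule.mem_inf.mpr ⟨h1, h2⟩
      rw [hTC] at hxm
      exact Subtype.ext hxm
    · rw [codisjoint_iff, eq_top_iff]
      rintro ⟨w, hw⟩ _
      obtain ⟨t, ht, cc, hcc, htc⟩ := Submodule.mem_sup.mp hw
      have htW : t ∈ W := (le_sup_left : T ≤ W) ht
      have hcW : cc ∈ W := (le_sup_right : C ≤ W) hcc
      refine Submodule.mem_sup.mpr ⟨⟨t, htW⟩, ht, ⟨cc, hcW⟩, hcc, ?_⟩
      exact Subtype.ext htc
  set proj := Submodule.linearProjOfIsCompl T' C' hcompl with hproj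
  set g : W →ₗ[R] M := W.subtype.comp ((T'.subtype).comp proj) with hg
  obtain ⟨p, hp⟩ := extend_sub W g
  have hpT : ∀ t ∈ T, p t = t := by
    intro t ht
    have htW : t ∈ W := (le_sup_left : T ≤ W) ht
    rw [hp t htW]
    have htT' : (⟨t, htW⟩ : W) ∈ T' := ht
    have hpr : proj ⟨t, htW⟩ = ⟨⟨t, htW⟩, htT'⟩ :=
      Submodule.linearProjOfIsCompl_apply_left hcompl ⟨⟨t, htW⟩, htT'⟩
    rw [hg]
    simp [hpr]
  have hpC : ∀ cc ∈ C, p cc = 0 := by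
    intro cc hcc
    have hcW : cc ∈ W := (le_sup_right : C ≤ W) hcc
    rw [hp cc hcW]
    have hpr : proj ⟨cc, hcW⟩ = 0 :=
      Submodule.projectionOnto_apply_of_mem_right (x := ⟨cc, hcW⟩) hcompl hcc
    rw [hg]
    simp [hpr]
  have hessrange : ∀ m : M, p m ≠ 0 → ∃ r : R, r • p m ≠ 0 ∧ r • p m ∈ L := by
    intro m hpm
    have hmC : m ∉ C := fun hmc => hpm (by rw [hpC m hmc])
    have hne : T ⊓ (C ⊔ Submodule.span R {m}) ≠ ⊥ := by
      intro hbot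
      have heq := hCmax _ le_sup_left hbot
      exact hmC (by
        have : m ∈ C ⊔ Submodule.span R {m} :=
          Submodule.mem_sup_right (Submodule.mem_span_singleton_self m)
        rwa [heq] at this)
    obtain ⟨t, htmem, ht0⟩ := Submodule.ne_bot_iff _ |>.mp hne
    obtain ⟨htT, htC'⟩ := Submodule.mem_inf.mp htmem
    obtain ⟨cc, hcc, sm, hsm, htsum⟩ := Submodule.mem_sup.mp htC'
    obtain ⟨r, hr⟩ := Submodule.mem_span_singleton.mp hsm
    have hteq : t = r • p m := by
      have h1 : p t = t := hpT t htT
      have h2 : p t = p cc + r • p m := by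
        rw [← htsum, map_add, ← hr, map_smul]
      rw [← h1, h2, hpC cc hcc, zero_add]
    obtain ⟨r', h1', h2'⟩ := hTess t htT ht0
    refine ⟨r' * r, ?_, ?_⟩
    · rw [mul_smul, ← hteq]; exact h1'
    · rw [mul_smul, ← hteq]; exact h2'
  have hrangeT : LinearMap.range p = T := by
    apply hTmax
    · intro t ht
      exact ⟨t, hpT t ht⟩
    · intro x hx
      exact ⟨x, hpT x (hLT hx)⟩
    · rintro m' ⟨m, rfl⟩ hm'
      exact hessrange m hm'
  have hrange : ∀ m : M, p m ∈ T := fun m => hrangeT ▸ LinearMap.mem_range_self p m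
  have hidem : p * p = p := by
    ext m
    exact hpT (p m) (hrange m)
  refine ⟨p, hidem, fun x hx => hpT x (hLT hx), ?_⟩
  intro a ha
  intro m hm
  obtain ⟨r, hr0, hrTC⟩ := hTCess m hm
  obtain ⟨t, ht, cc, hcc, hsum⟩ := Submodule.mem_sup.mp hrTC
  by_cases ht0 : t = 0
  · refine ⟨r, hr0, ?_⟩
    rw [LinearMap.mem_ker, Module.End.mul_apply, ← hsum, ht0, zero_add, hpC cc hcc,
      map_zero]
  · obtain ⟨r', h1', h2'⟩ := hTess t ht ht0
    refine ⟨r' * r, ?_, ?_⟩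
    · rw [mul_smul, ← hsum, smul_add]
      intro h0
      have : r' • t = -(r' • cc) := by
        rw [eq_neg_iff_add_eq_zero]; exact h0
      have hmem : r' • t ∈ T ⊓ C := Submodule.mem_inf.mpr
        ⟨Submodule.smul_mem T r' ht, this ▸ Submodule.neg_mem C (Submodule.smul_mem C r' hcc)⟩
      rw [hTC] at hmem
      exact h1' hmem
    · rw [LinearMap.mem_ker, Module.End.mul_apply, mul_smul, ← hsum, smul_add, map_add]
      have hT1 : p (r' • t) = r' • t := hpT _ (Submodule.smul_mem T r' ht)
      have hC1 : p (r' • cc) = 0 := hpC _ (Submodule.smul_mem C r' hcc)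
      rw [hT1, hC1, add_zero, ha _ h2']

/-- Quasi-inverse modulo essential kernel. -/
lemma exists_quasi_inv (a : Module.End R M) :
    ∃ c : Module.End R M, Ess (LinearMap.ker (a - a * c * a)) := by
  obtain ⟨C, hKC, hCmax, hess⟩ := exists_compl' (LinearMap.ker a)
  have hinj : Function.Injective (a ∘ₗ C.subtype) := by
    rw [← LinearMap.ker_eq_bot, Submodule.eq_bot_iff]
    intro x hx
    rw [LinearMap.mem_ker, LinearMap.comp_apply] at hx
    have hxm : (x : M) ∈ LinearMap.ker a ⊓ C :=
      Submodule.mem_inf.mpr ⟨hx, x.2⟩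
    rw [hKC] at hxm
    exact Subtype.ext hxm
  set e := LinearEquiv.ofInjective (a ∘ₗ C.subtype) hinj with he
  obtain ⟨c, hc⟩ := extend_sub (LinearMap.range (a ∘ₗ C.subtype))
    (C.subtype.comp (e.symm : LinearMap.range (a ∘ₗ C.subtype) →ₗ[R] C))
  have hkey : ∀ x ∈ C, c (a x) = x := by
    intro x hx
    have hmem : a x ∈ LinearMap.range (a ∘ₗ C.subtype) := ⟨⟨x, hx⟩, rfl⟩
    rw [hc (a x) hmem]
    have hee : e ⟨x, hx⟩ = ⟨a x, hmem⟩ := by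
      apply Subtype.ext
      simp [he, LinearEquiv.ofInjective_apply]
    have hsy : e.symm ⟨a x, hmem⟩ = ⟨x, hx⟩ := by
      rw [← hee, LinearEquiv.symm_apply_apply]
    simp [hsy]
  refine ⟨c, ess_mono ?_ hess⟩
  rw [sup_le_iff]
  constructor
  · intro k hk
    rw [LinearMap.mem_ker] at hk
    rw [LinearMap.mem_ker, LinearMap.sub_apply, Module.End.mul_apply, Module.End.mul_apply,
      hk, map_zero, map_zero, sub_zero]
  · intro x hx
    rw [LinearMap.mem_ker, LinearMap.sub_apply, Module.End.mul_apply, Module.End.mul_apply,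
      hkey x hx, sub_self]

end Injective

end ModuleLemmas

section Endo

variable {R : Type*} [Ring R] {M : Type*} [AddCommGroup M] [Module R M]

/-- The congruence "equal modulo essential kernel" on the endomorphism ring. -/
def essCon : RingCon (Module.End R M) where
  r s t := Ess (LinearMap.ker (s - t))
  iseqv := by
    constructor
    · intro s
      show Ess (LinearMap.ker (s - s))
      have h : s - s = 0 := sub_self s
      rw [h]
      exact ess_mono (by rw [LinearMap.ker_zero]) ess_top
    · intro s t h
      show Ess (LinearMap.ker (t - s))
      have h' : t - s = -(s - t) := by abel
      rw [h']
      exact ess_ker_neg h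
    · intro s t u h1 h2
      show Ess (LinearMap.ker (s - u))
      have h' : s - u = (s - t) + (t - u) := by abel
      rw [h']
      exact ess_ker_add h1 h2
  add' := by
    intro a b c d h1 h2
    show Ess (LinearMap.ker (a + c - (b + d)))
    have h' : a + c - (b + d) = (a - b) + (c - d) := by abel
    rw [h']
    exact ess_ker_add h1 h2
  mul' := by
    intro a b c d h1 h2
    show Ess (LinearMap.ker (a * c - b * d))
    have h' : a * c - b * d = a * (c - d) + (a - b) * d := by noncomm_ring
    rw [h']
    exact ess_ker_add (ess_ker_mul_left a h2) (ess_ker_mul_right d h1)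

lemma essCon_iff {s t : Module.End R M} :
    (essCon : RingCon (Module.End R M)) s t ↔ Ess (LinearMap.ker (s - t)) := Iff.rfl

variable [Module.Injective R M]
variable (hsing : ∀ s : Module.End R M,
    (∃ t : Module.End R M, t ≠ 0 ∧ s * t = 0) →
    ∃ l : List (Module.End R M), (∀ e ∈ l, e * e = e) ∧ s = l.prod)

include hsing in
/-- An endomorphism with a kernel-essential "error from identity" is a unit. -/
lemma isUnit_one_sub_of_ess (d : Module.End R M) (hd : Ess (LinearMap.ker d)) :
    IsUnit (1 - d) := by
  have hinj : Function.Injective (1 - d : Module.End R M) := by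
    rw [← LinearMap.ker_eq_bot, Submodule.eq_bot_iff]
    intro m hm
    rw [LinearMap.mem_ker, LinearMap.sub_apply, Module.End.one_apply, sub_eq_zero] at hm
    by_contra h0
    obtain ⟨r, h1, h2⟩ := hd m h0
    rw [LinearMap.mem_ker] at h2
    rw [map_smul, ← hm] at h2
    exact h1 h2
  obtain ⟨u, hu⟩ := exists_left_inv (1 - d) hinj
  exact ⟨⟨1 - d, u, df hsing u (1 - d) hu, hu⟩, rfl⟩

include hsing in
lemma isUnit_of_quot_isUnit (s : Module.End R M)
    (hu : IsUnit ((s : (essCon : RingCon (Module.End R M)).Quotient))) : IsUnit s := by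
  obtain ⟨u, hu'⟩ := hu
  obtain ⟨v, hv⟩ : ∃ v : Module.End R M,
      (v : (essCon : RingCon (Module.End R M)).Quotient) = ↑u⁻¹ :=
    Quot.exists_rep _
  have h1 : ((s * v : Module.End R M) : (essCon : RingCon (Module.End R M)).Quotient)
      = 1 := by
    rw [RingCon.coe_mul, hv, ← hu', Units.mul_inv]
  have h2 : (essCon : RingCon (Module.End R M)) (s * v) 1 := by
    rw [← RingCon.coe_one (essCon : RingCon (Module.End R M))] at h1
    exact (RingCon.eq _).mp h1
  rw [essCon_iff] at h2
  have h3 : IsUnit (1 - (1 - s * v)) := by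
    apply isUnit_one_sub_of_ess hsing
    have : (1 : Module.End R M) - (s * v) = -(s * v - 1) := by abel
    rw [this]
    exact ess_ker_neg h2
  rw [sub_sub_cancel] at h3
  obtain ⟨w, hw⟩ := h3
  have h4 : s * (v * ↑w⁻¹) = 1 := by
    rw [← mul_assoc]
    calc s * v * ↑w⁻¹ = ↑w * ↑w⁻¹ := by rw [hw]
      _ = 1 := w.mul_inv
  exact isUnit_of_mul_inv hsing s _ h4

end Endo

end SR1Aux

/-- Let `M` be an injective right `R`-module (formalized as a left module over
`Rᵐᵒᵖ`) and `S = End_R(M)`. If every right singular element of `S` is a product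
of idempotents, then `S` has stable range 1. -/
theorem stableRangeOne_of_endo_injective_prod_idempotents
    (R : Type*) [Ring R] (M : Type*) [AddCommGroup M] [Module Rᵐᵒᵖ M]
    [Module.Injective Rᵐᵒᵖ M]
    (h : ∀ s : Module.End Rᵐᵒᵖ M,
      (∃ t : Module.End Rᵐᵒᵖ M, t ≠ 0 ∧ s * t = 0) →
      ∃ l : List (Module.End Rᵐᵒᵖ M), (∀ e ∈ l, e * e = e) ∧ s = l.prod) :
    ∀ a b : Module.End Rᵐᵒᵖ M,
      (∃ x y : Module.End Rᵐᵒᵖ M, a * x + b * y = 1) →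
      ∃ x : Module.End Rᵐᵒᵖ M, IsUnit (a + b * x) := by
  classical
  intro a b hex
  obtain ⟨x, y, hxy⟩ := hex
  suffices hsuff : ∃ z : Module.End Rᵐᵒᵖ M, IsUnit (a + (b * y) * z) by
    obtain ⟨z, hz⟩ := hsuff
    refine ⟨y * z, ?_⟩
    rwa [← mul_assoc]
  obtain ⟨c, hδ⟩ := SR1Aux.exists_quasi_inv (R := Rᵐᵒᵖ) (M := M) a
  by_cases hca : SR1Aux.Ess (LinearMap.ker ((1 : Module.End Rᵐᵒᵖ M) - c * a))
  · -- `c * a` is a unit, hence `a` is a unit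
    have h1 : IsUnit ((1 : Module.End Rᵐᵒᵖ M) - (1 - c * a)) :=
      SR1Aux.isUnit_one_sub_of_ess h _ hca
    rw [sub_sub_cancel] at h1
    obtain ⟨u, hu⟩ := h1
    have h2 : (↑u⁻¹ * c) * a = 1 := by
      rw [mul_assoc]
      calc (↑u⁻¹ : Module.End Rᵐᵒᵖ M) * (c * a) = ↑u⁻¹ * ↑u := by rw [hu]
        _ = 1 := u.inv_mul
    have h3 : a * (↑u⁻¹ * c) = 1 := SR1Aux.df h _ _ h2
    exact ⟨0, by rw [mul_zero, add_zero]; exact ⟨⟨a, ↑u⁻¹ * c, h3, h2⟩, rfl⟩⟩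
  · -- there is a nonzero `ℓ` with `a ℓ = 0`
    rw [SR1Aux.Ess] at hca
    push_neg at hca
    obtain ⟨m, hm0, hm⟩ := hca
    have hm' : ∀ r : Rᵐᵒᵖ,
        r • m ∈ LinearMap.ker ((1 : Module.End Rᵐᵒᵖ M) - c * a) → r • m = 0 := by
      intro r hmem
      by_contra h0
      exact hm r h0 hmem
    obtain ⟨r₀, hr₀, hrker⟩ := hδ m hm0
    set ℓ := ((1 : Module.End Rᵐᵒᵖ M) - c * a) (r₀ • m) with hℓ
    have hℓ0 : ℓ ≠ 0 := by
      intro h0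
      exact hr₀ (hm' r₀ (LinearMap.mem_ker.mpr h0))
    have haℓ : a ℓ = 0 := by
      have hcomp : ∀ n : M, a (((1 : Module.End Rᵐᵒᵖ M) - c * a) n)
          = (a - a * c * a) n := by
        intro n
        simp only [LinearMap.sub_apply, Module.End.one_apply, Module.End.mul_apply, map_sub]
      rw [hℓ, hcomp (r₀ • m)]
      exact hrker
    set L := Submodule.span Rᵐᵒᵖ {ℓ} with hL
    have haL : ∀ z ∈ L, a z = 0 := by
      intro z hz
      obtain ⟨r, hr⟩ := Submodule.mem_span_singleton.mp hz
      rw [← hr, map_smul, haℓ, smul_zero]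
    obtain ⟨p, hpp, hpfix, hpker⟩ := SR1Aux.exists_idem_proj (R := Rᵐᵒᵖ) (M := M) L
    have hp0 : p ≠ 0 := by
      intro h0
      have hfix : p ℓ = ℓ := hpfix ℓ (Submodule.mem_span_singleton_self ℓ)
      rw [h0] at hfix
      exact hℓ0 (by rw [← hfix]; rfl)
    have hsp : (a - a * p) * p = 0 := by
      rw [sub_mul, mul_assoc, hpp, sub_self]
    obtain ⟨l, hl, hprod⟩ := h (a - a * p) ⟨p, hp0, hsp⟩
    -- pass to the quotient
    have hsurj : ∀ q : (SR1Aux.essCon : RingCon (Module.End Rᵐᵒᵖ M)).Quotient,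
        ∃ s : Module.End Rᵐᵒᵖ M, (s : _) = q := fun q => Quot.exists_rep q
    have hmk : ((a : Module.End Rᵐᵒᵖ M) :
        (SR1Aux.essCon : RingCon (Module.End Rᵐᵒᵖ M)).Quotient) = ((a - a * p :
        Module.End Rᵐᵒᵖ M) : _) := by
      rw [RingCon.eq, SR1Aux.essCon_iff]
      have hsub : a - (a - a * p) = a * p := by abel
      rw [hsub]
      exact hpker a haL
    have hcoe_prod : ∀ l' : List (Module.End Rᵐᵒᵖ M),
        ((l'.prod : Module.End Rᵐᵒᵖ M) :
          (SR1Aux.essCon : RingCon (Module.End Rᵐᵒᵖ M)).Quotient)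
        = (l'.map (fun s : Module.End Rᵐᵒᵖ M => (s :
            (SR1Aux.essCon : RingCon (Module.End Rᵐᵒᵖ M)).Quotient))).prod := by
      intro l'
      induction l' with
      | nil => simp [List.prod_nil]
      | cons f l'' ih => rw [List.prod_cons, List.map_cons, List.prod_cons,
          RingCon.coe_mul, ih]
    have hidemQ : ∀ ee ∈ l.map (fun s : Module.End Rᵐᵒᵖ M => (s :
        (SR1Aux.essCon : RingCon (Module.End Rᵐᵒᵖ M)).Quotient)), ee * ee = ee := by
      intro ee hee
      obtain ⟨f, hf, rfl⟩ := List.mem_map.mp hee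
      rw [← RingCon.coe_mul, hl f hf]
    have heqQ : (l.map (fun s : Module.End Rᵐᵒᵖ M => (s :
        (SR1Aux.essCon : RingCon (Module.End Rᵐᵒᵖ M)).Quotient))).prod
        * ((x : Module.End Rᵐᵒᵖ M) : _) + ((b * y : Module.End Rᵐᵒᵖ M) : _) = 1 := by
      rw [← hcoe_prod, ← hprod, ← hmk, ← RingCon.coe_mul, ← RingCon.coe_add, hxy,
        RingCon.coe_one]
    obtain ⟨zq, hzq⟩ := SR1Aux.lemA _ hidemQ _ _ heqQ
    obtain ⟨z, rfl⟩ := hsurj zq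
    have hcoe : ((a + (b * y) * z : Module.End Rᵐᵒᵖ M) :
        (SR1Aux.essCon : RingCon (Module.End Rᵐᵒᵖ M)).Quotient)
        = (l.map (fun s : Module.End Rᵐᵒᵖ M => (s :
            (SR1Aux.essCon : RingCon (Module.End Rᵐᵒᵖ M)).Quotient))).prod
          + ((b * y : Module.End Rᵐᵒᵖ M) : _) * ((z : Module.End Rᵐᵒᵖ M) : _) := by
      rw [RingCon.coe_add, RingCon.coe_mul, hmk, hprod, hcoe_prod]
    have hzu : IsUnit ((a + (b * y) * z : Module.End Rᵐᵒᵖ M) :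
        (SR1Aux.essCon : RingCon (Module.End Rᵐᵒᵖ M)).Quotient) := by
      rw [hcoe]
      exact hzq
    exact ⟨z, SR1Aux.isUnit_of_quot_isUnit h _ hzu⟩
end
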